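/- arXiv:1407.1349 — 4 statements merged into one kernel-verified Lean document; each statement's English description precedes it below -/
import Mathlib

section
/- Let 0 ≠ T = (T_n) ∈ A and let ε > 0. Then there exist k, m ∈ ℕ such that for every integer r ≥ 0 and every n ≥ max{k, m}: ‖(Δ̄_U T_n)^r‖ ≤ Σ_{s=0}^{k−1} binom(r, s) · (2 p(T))^r · ε^{r−s}, where binom(r,s) = 0 when r < s. -/
noncomputable section

/-- The operator norm on `M_n(ℂ)` acting on `ℓ²(Fin n)`. -/
def opNorm {n : ℕ} (x : Matrix (Fin n) (Fin n) ℂ) : ℝ :=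
  ‖LinearMap.toContinuousLinearMap (Matrix.toEuclideanLin x)‖

/-- The diagonal matrix `d_n` whose `k`-th diagonal entry is `c_n ^ k` (for `1 ≤ k ≤ n`). -/
def dMat (c : ℕ → ℝ) (n : ℕ) : Matrix (Fin n) (Fin n) ℂ :=
  Matrix.diagonal fun k => ((c n ^ ((k : ℕ) + 1) : ℝ) : ℂ)

/-- The inverse `d_n⁻¹`. -/
def dMatInv (c : ℕ → ℝ) (n : ℕ) : Matrix (Fin n) (Fin n) ℂ :=
  Matrix.diagonal fun k => (((c n ^ ((k : ℕ) + 1))⁻¹ : ℝ) : ℂ)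

/-- The norm `p_n(x) = max {‖x‖, ‖d_n x d_n⁻¹‖}`. -/
def pnorm (c : ℕ → ℝ) (n : ℕ) (x : Matrix (Fin n) (Fin n) ℂ) : ℝ :=
  max (opNorm x) (opNorm (dMat c n * x * dMatInv c n))

/-- The left shift `L_n`: `L_n e_{k+1} = e_k`, `L_n e_1 = 0`. -/
def Lmat (n : ℕ) : Matrix (Fin n) (Fin n) ℂ :=
  Matrix.of fun i j => if (i : ℕ) + 1 = (j : ℕ) then 1 else 0

/-- The integer interval `E_{n,k} = {i ∈ ℕ : n/k ≤ i ≤ 2n/k}`. -/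
def Eset (n k : ℕ) : Finset ℕ :=
  (Finset.range (2 * n + 1)).filter fun i => (n : ℝ) / k ≤ i ∧ (i : ℝ) ≤ 2 * n / k

/-- `u_{n,k} = μ_{n,k}⁻¹ ∑_{i ∈ E_{n,k}} L_n^i` if `k ≤ n`, and `u_{n,k} = I_n` if `n < k`. -/
def umat (n k : ℕ) : Matrix (Fin n) (Fin n) ℂ :=
  if k ≤ n then ((Eset n k).card : ℂ)⁻¹ • ∑ i ∈ Eset n k, Lmat n ^ i else 1

/-- Membership in the algebra `A`: `p(T) < ∞` and
`sup_n p_n(T_n u_{n,k} − T_n) + sup_n p_n(u_{n,k} T_n − T_n) → 0` as `k → ∞`. -/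
def memA (c : ℕ → ℝ) (T : ∀ n, Matrix (Fin n) (Fin n) ℂ) : Prop :=
  (∃ M : ℝ, ∀ n, pnorm c n (T n) ≤ M) ∧
  ∀ ε : ℝ, 0 < ε → ∃ K : ℕ, ∀ k, K ≤ k → ∀ n,
    pnorm c n (T n * umat n k - T n) + pnorm c n (umat n k * T n - T n) ≤ ε

/-- `p(T) = sup_n p_n(T_n)`. -/
def pA (c : ℕ → ℝ) (T : ∀ n, Matrix (Fin n) (Fin n) ℂ) : ℝ :=
  ⨆ n, pnorm c n (T n)

/-- The upper triangular part `Δ̄_U x`. -/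
def upperT {n : ℕ} (x : Matrix (Fin n) (Fin n) ℂ) : Matrix (Fin n) (Fin n) ℂ :=
  Matrix.of fun i j => if i ≤ j then x i j else 0

/-- The strictly lower triangular part `Δ_L x`. -/
def lowerT {n : ℕ} (x : Matrix (Fin n) (Fin n) ℂ) : Matrix (Fin n) (Fin n) ℂ :=
  Matrix.of fun i j => if j < i then x i j else 0


-- ===== auxiliary lemmas =====

lemma opNorm_eq_clm {n : ℕ} (x : Matrix (Fin n) (Fin n) ℂ) :
    opNorm x = ‖Matrix.toEuclideanCLM (𝕜 := ℂ) x‖ := rfl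

lemma opNorm_nonneg {n : ℕ} (x : Matrix (Fin n) (Fin n) ℂ) : 0 ≤ opNorm x :=
  norm_nonneg _

lemma opNorm_zero {n : ℕ} : opNorm (0 : Matrix (Fin n) (Fin n) ℂ) = 0 := by
  rw [opNorm_eq_clm, map_zero, norm_zero]

lemma opNorm_add_le {n : ℕ} (x y : Matrix (Fin n) (Fin n) ℂ) :
    opNorm (x + y) ≤ opNorm x + opNorm y := by
  rw [opNorm_eq_clm, opNorm_eq_clm, opNorm_eq_clm, map_add]; exact norm_add_le _ _

lemma opNorm_neg {n : ℕ} (x : Matrix (Fin n) (Fin n) ℂ) : opNorm (-x) = opNorm x := by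
  rw [opNorm_eq_clm, opNorm_eq_clm, map_neg, norm_neg]

lemma opNorm_sub_le {n : ℕ} (x y : Matrix (Fin n) (Fin n) ℂ) :
    opNorm (x - y) ≤ opNorm x + opNorm y := by
  rw [sub_eq_add_neg]
  exact (opNorm_add_le _ _).trans (by rw [opNorm_neg])

lemma opNorm_mul_le {n : ℕ} (x y : Matrix (Fin n) (Fin n) ℂ) :
    opNorm (x * y) ≤ opNorm x * opNorm y := by
  rw [opNorm_eq_clm, opNorm_eq_clm, opNorm_eq_clm, map_mul]
  exact ContinuousLinearMap.opNorm_comp_le _ _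

lemma opNorm_eq_zero_iff {n : ℕ} (x : Matrix (Fin n) (Fin n) ℂ) : opNorm x = 0 ↔ x = 0 := by
  rw [opNorm_eq_clm, norm_eq_zero, ← map_zero (Matrix.toEuclideanCLM (𝕜 := ℂ) (n := Fin n))]
  exact EmbeddingLike.apply_eq_iff_eq _

lemma euclid_apply {n : ℕ} (x : Matrix (Fin n) (Fin n) ℂ) (v : EuclideanSpace ℂ (Fin n)) (a : Fin n) :
    (LinearMap.toContinuousLinearMap (Matrix.toEuclideanLin x)) v a = ∑ b, x a b * v b := rfl

lemma schur_bound {n : ℕ} (x : Matrix (Fin n) (Fin n) ℂ) (B : ℝ) (hB : 0 ≤ B)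
    (hrow : ∀ a, ∑ b, ‖x a b‖ ≤ B) (hcol : ∀ b, ∑ a, ‖x a b‖ ≤ B) :
    opNorm x ≤ B := by
  apply ContinuousLinearMap.opNorm_le_bound _ hB
  intro v
  set w := (LinearMap.toContinuousLinearMap (Matrix.toEuclideanLin x)) v with hw
  have hwnn : (0:ℝ) ≤ B * ‖v‖ := by positivity
  have hsq : ‖w‖ ^ 2 ≤ (B * ‖v‖) ^ 2 := by
    have h1 : ‖w‖ ^ 2 = ∑ a, ‖w a‖ ^ 2 := by
      rw [EuclideanSpace.norm_eq, Real.sq_sqrt (by positivity)]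
    have h2 : ‖v‖ ^ 2 = ∑ b, ‖v b‖ ^ 2 := by
      rw [EuclideanSpace.norm_eq, Real.sq_sqrt (by positivity)]
    have key : ∀ a, ‖w a‖ ^ 2 ≤ B * ∑ b, ‖x a b‖ * ‖v b‖ ^ 2 := by
      intro a
      have e1 : ‖w a‖ ≤ ∑ b, ‖x a b‖ * ‖v b‖ := by
        rw [hw, euclid_apply]
        exact (norm_sum_le _ _).trans (le_of_eq (by simp [norm_mul]))
      have e2 : (∑ b, ‖x a b‖ * ‖v b‖) ^ 2 ≤
          (∑ b, ‖x a b‖) * ∑ b, ‖x a b‖ * ‖v b‖ ^ 2 := by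
        apply Finset.sum_sq_le_sum_mul_sum_of_sq_eq_mul
        · intro b _; positivity
        · intro b _; positivity
        · intro b _; ring
      calc ‖w a‖ ^ 2 ≤ (∑ b, ‖x a b‖ * ‖v b‖) ^ 2 := by
            apply pow_le_pow_left₀ (norm_nonneg _) e1
        _ ≤ (∑ b, ‖x a b‖) * ∑ b, ‖x a b‖ * ‖v b‖ ^ 2 := e2
        _ ≤ B * ∑ b, ‖x a b‖ * ‖v b‖ ^ 2 := by
            apply mul_le_mul_of_nonneg_right (hrow a)
            apply Finset.sum_nonneg; intro b _; positivity
    calc ‖w‖ ^ 2 = ∑ a, ‖w a‖ ^ 2 := h1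
      _ ≤ ∑ a, B * ∑ b, ‖x a b‖ * ‖v b‖ ^ 2 := Finset.sum_le_sum fun a _ => key a
      _ = B * ∑ b, (∑ a, ‖x a b‖) * ‖v b‖ ^ 2 := by
          rw [← Finset.mul_sum, Finset.sum_comm]
          congr 1; apply Finset.sum_congr rfl; intro b _; rw [Finset.sum_mul]
      _ ≤ B * ∑ b, B * ‖v b‖ ^ 2 := by
          apply mul_le_mul_of_nonneg_left _ hB
          apply Finset.sum_le_sum; intro b _
          apply mul_le_mul_of_nonneg_right (hcol b) (by positivity)
      _ = (B * ‖v‖) ^ 2 := by rw [← Finset.mul_sum, ← h2]; ring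
  calc ‖w‖ = Real.sqrt (‖w‖ ^ 2) := (Real.sqrt_sq (norm_nonneg _)).symm
    _ ≤ Real.sqrt ((B * ‖v‖) ^ 2) := Real.sqrt_le_sqrt hsq
    _ = B * ‖v‖ := Real.sqrt_sq hwnn


lemma entry_le_opNorm {n : ℕ} (x : Matrix (Fin n) (Fin n) ℂ) (a b : Fin n) :
    ‖x a b‖ ≤ opNorm x := by
  set f := LinearMap.toContinuousLinearMap (Matrix.toEuclideanLin x) with hf
  set v : EuclideanSpace ℂ (Fin n) := EuclideanSpace.single b 1 with hv
  have h1 : ‖f v‖ ≤ opNorm x * ‖v‖ := ContinuousLinearMap.le_opNorm _ _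
  have hv1 : ‖v‖ = 1 := by simp [hv]
  have h2 : f v a = x a b := by
    rw [euclid_apply, Finset.sum_eq_single b]
    · simp [hv, EuclideanSpace.single_apply]
    · intro c _ hc; simp [hv, EuclideanSpace.single_apply, hc]
    · simp
  have h3 : ‖x a b‖ ≤ ‖f v‖ := by
    rw [← h2, EuclideanSpace.norm_eq]
    calc ‖f v a‖ = Real.sqrt (‖f v a‖ ^ 2) := (Real.sqrt_sq (norm_nonneg _)).symm
      _ ≤ Real.sqrt (∑ i, ‖f v i‖ ^ 2) := Real.sqrt_le_sqrt
          (Finset.single_le_sum (f := fun i => ‖f v i‖ ^ 2) (fun i _ => by positivity)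
            (Finset.mem_univ a))
  calc ‖x a b‖ ≤ ‖f v‖ := h3
    _ ≤ opNorm x * ‖v‖ := h1
    _ = opNorm x := by rw [hv1, mul_one]


lemma geom_helper {β : Type*} {c : ℝ} (hc : 2 ≤ c) (s : Finset β) (e : β → ℕ)
    (he : Set.InjOn e s) (e₀ : ℕ) (hlb : ∀ y ∈ s, e₀ ≤ e y) :
    ∑ y ∈ s, c⁻¹ ^ (e y) ≤ 2 * c⁻¹ ^ e₀ := by
  have hc0 : (0:ℝ) < c := by linarith
  have hci : (0:ℝ) ≤ c⁻¹ := by positivity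
  have hci2 : c⁻¹ ≤ 2⁻¹ := by
    rw [inv_le_inv₀ hc0 (by norm_num)]; exact hc
  have h1 : ∑ y ∈ s, c⁻¹ ^ (e y) = ∑ m ∈ s.image e, c⁻¹ ^ m := by
    rw [Finset.sum_image (fun y hy z hz h => he hy hz h)]
  set M := (s.image e).sup id + 1 with hM
  have hsub : s.image e ⊆ Finset.Ico e₀ M := by
    intro m hm
    rw [Finset.mem_Ico]
    constructor
    · obtain ⟨y, hy, rfl⟩ := Finset.mem_image.mp hm
      exact hlb y hy
    · exact Nat.lt_succ_of_le (Finset.le_sup (f := id) hm)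
  have h2 : ∑ m ∈ s.image e, c⁻¹ ^ m ≤ ∑ m ∈ Finset.Ico e₀ M, c⁻¹ ^ m :=
    Finset.sum_le_sum_of_subset_of_nonneg hsub (fun m _ _ => by positivity)
  have h3 : ∑ m ∈ Finset.Ico e₀ M, c⁻¹ ^ m = c⁻¹ ^ e₀ * ∑ j ∈ Finset.range (M - e₀), c⁻¹ ^ j := by
    rw [Finset.sum_Ico_eq_sum_range]
    rw [Finset.mul_sum]
    apply Finset.sum_congr rfl
    intro j _; rw [← pow_add]
  have h4 : ∑ j ∈ Finset.range (M - e₀), c⁻¹ ^ j ≤ 2 := by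
    calc ∑ j ∈ Finset.range (M - e₀), c⁻¹ ^ j ≤ ∑ j ∈ Finset.range (M - e₀), (2⁻¹:ℝ) ^ j := by
          apply Finset.sum_le_sum; intro j _; exact pow_le_pow_left₀ hci hci2 j
      _ ≤ 2 := by
          rw [geom_sum_eq (by norm_num)]
          rw [div_le_iff_of_neg (by norm_num)]
          have : (0:ℝ) ≤ (2⁻¹:ℝ) ^ (M - e₀) := by positivity
          linarith
  calc ∑ y ∈ s, c⁻¹ ^ (e y) = ∑ m ∈ s.image e, c⁻¹ ^ m := h1
    _ ≤ ∑ m ∈ Finset.Ico e₀ M, c⁻¹ ^ m := h2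
    _ = c⁻¹ ^ e₀ * ∑ j ∈ Finset.range (M - e₀), c⁻¹ ^ j := h3
    _ ≤ c⁻¹ ^ e₀ * 2 := by
        apply mul_le_mul_of_nonneg_left h4 (by positivity)
    _ = 2 * c⁻¹ ^ e₀ := by ring


lemma Lpow_entry {n : ℕ} (i : ℕ) (a b : Fin n) :
    (Lmat n ^ i) a b = if (a : ℕ) + i = (b : ℕ) then 1 else 0 := by
  induction i generalizing a b with
  | zero => simp [Matrix.one_apply, Fin.ext_iff, eq_comm]
  | succ i ih =>
    rw [pow_succ, Matrix.mul_apply]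
    simp_rw [ih]
    by_cases h : (a : ℕ) + i < n
    · rw [Finset.sum_eq_single (⟨(a : ℕ) + i, h⟩ : Fin n)]
      · simp [Lmat, add_assoc]
      · intro c _ hc
        rw [if_neg, zero_mul]
        intro hac
        exact hc (Fin.ext (by simpa using hac.symm))
      · simp
    · rw [Finset.sum_eq_zero, if_neg (by omega)]
      intro c _
      rw [if_neg (by omega), zero_mul]

lemma TLpow_entry {n : ℕ} (T : Matrix (Fin n) (Fin n) ℂ) (i : ℕ) (a b : Fin n) :
    (T * Lmat n ^ i) a b =
      if i ≤ (b : ℕ) then T a ⟨(b : ℕ) - i, lt_of_le_of_lt (Nat.sub_le _ _) b.isLt⟩ else 0 := by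
  rw [Matrix.mul_apply]
  simp_rw [Lpow_entry]
  by_cases h : i ≤ (b : ℕ)
  · rw [Finset.sum_eq_single (⟨(b : ℕ) - i, lt_of_le_of_lt (Nat.sub_le _ _) b.isLt⟩ : Fin n)]
    · rw [if_pos h, if_pos (by simp; omega), mul_one]
    · intro c _ hc
      rw [if_neg, mul_zero]
      intro hci
      exact hc (Fin.ext (by simp; omega))
    · simp
  · rw [Finset.sum_eq_zero, if_neg h]
    intro c _
    rw [if_neg (by omega), mul_zero]

lemma mem_Eset_le {n k i : ℕ} (hi : i ∈ Eset n k) : ⌈(n : ℝ) / k⌉₊ ≤ i := by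
  rw [Eset, Finset.mem_filter] at hi
  exact Nat.ceil_le.mpr hi.2.1

lemma Tu_entry_bound {n k : ℕ} (hkn : k ≤ n) (T : Matrix (Fin n) (Fin n) ℂ) (a b : Fin n) :
    ‖(T * umat n k) a b‖ ≤ (((Eset n k).card : ℝ))⁻¹ * ∑ i ∈ Eset n k,
      (if i ≤ (b : ℕ) then ‖T a ⟨(b : ℕ) - i, lt_of_le_of_lt (Nat.sub_le _ _) b.isLt⟩‖ else 0) := by
  rw [umat, if_pos hkn, Matrix.mul_smul, Matrix.mul_sum]
  rw [Matrix.smul_apply, Matrix.sum_apply]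
  rw [smul_eq_mul, norm_mul, norm_inv, Complex.norm_natCast]
  apply mul_le_mul_of_nonneg_left _ (by positivity)
  refine (norm_sum_le _ _).trans ?_
  apply Finset.sum_le_sum
  intro i _
  rw [TLpow_entry]
  split_ifs <;> simp


lemma n_le_k_mul_ceil {n k : ℕ} (hk : 1 ≤ k) : n ≤ k * ⌈(n : ℝ) / k⌉₊ := by
  have hk0 : (0:ℝ) < k := by exact_mod_cast hk
  have h1 : (n : ℝ) / k ≤ (⌈(n : ℝ) / k⌉₊ : ℝ) := Nat.le_ceil _
  have h2 : (n : ℝ) ≤ k * ⌈(n : ℝ) / k⌉₊ := by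
    rw [← div_le_iff₀' hk0]; exact h1
  exact_mod_cast h2

lemma ceil_pos_of {n k : ℕ} (hk : 1 ≤ k) (hn : 1 ≤ n) : 1 ≤ ⌈(n : ℝ) / k⌉₊ := by
  have hk0 : (0:ℝ) < k := by exact_mod_cast hk
  apply Nat.ceil_pos.mpr
  positivity

lemma Eset_card_lb {n k : ℕ} (hk : 1 ≤ k) (hkn : k ≤ n) : n / k ≤ (Eset n k).card := by
  have hk0 : (0:ℝ) < k := by exact_mod_cast hk
  set t := ⌈(n : ℝ) / k⌉₊ with ht
  set q := n / k with hq
  set q2 := 2 * n / k with hq2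
  have hfloor : ⌊(n : ℝ) / k⌋₊ = q := by
    rw [Nat.floor_div_natCast, Nat.floor_natCast]
  have htq : t ≤ q + 1 := by
    apply Nat.ceil_le.mpr
    have := Nat.lt_floor_add_one ((n : ℝ) / k)
    rw [hfloor] at this
    push_cast
    linarith
  have hq2q : 2 * q ≤ q2 := Nat.mul_div_le_mul_div_assoc 2 n k
  have hsub : Finset.Icc t q2 ⊆ Eset n k := by
    intro i hi
    rw [Finset.mem_Icc] at hi
    rw [Eset, Finset.mem_filter, Finset.mem_range]
    have hi2 : (i : ℝ) ≤ 2 * n / k := by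
      calc (i : ℝ) ≤ (q2 : ℝ) := by exact_mod_cast hi.2
        _ ≤ 2 * n / k := by
            rw [hq2]
            exact_mod_cast Nat.cast_div_le
    refine ⟨?_, ?_, hi2⟩
    · have : q2 ≤ 2 * n := Nat.div_le_self _ _
      omega
    · calc (n : ℝ) / k ≤ (t : ℝ) := Nat.le_ceil _
        _ ≤ i := by exact_mod_cast hi.1
  calc n / k = q := rfl
    _ ≤ q2 + 1 - t := by omega
    _ = (Finset.Icc t q2).card := (Nat.card_Icc t q2).symm
    _ ≤ (Eset n k).card := Finset.card_le_card hsub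


lemma entry_bound_low {n : ℕ} (c : ℕ → ℝ) (hc : 1 < c n) (x : Matrix (Fin n) (Fin n) ℂ)
    (a b : Fin n) (hab : (b : ℕ) < (a : ℕ)) :
    ‖x a b‖ ≤ opNorm (dMat c n * x * dMatInv c n) * (c n)⁻¹ ^ ((a : ℕ) - (b : ℕ)) := by
  have hc0 : (0:ℝ) < c n := by linarith
  have hentry : (dMat c n * x * dMatInv c n) a b
      = ((c n ^ ((a : ℕ) + 1) : ℝ) : ℂ) * x a b * (((c n ^ ((b : ℕ) + 1))⁻¹ : ℝ) : ℂ) := by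
    rw [dMat, dMatInv, Matrix.mul_diagonal, Matrix.diagonal_mul]
  have hnorm : ‖(dMat c n * x * dMatInv c n) a b‖
      = c n ^ ((a : ℕ) + 1) * ‖x a b‖ * (c n ^ ((b : ℕ) + 1))⁻¹ := by
    rw [hentry, norm_mul, norm_mul, Complex.norm_real, Complex.norm_real,
      Real.norm_eq_abs, Real.norm_eq_abs, abs_of_pos (by positivity), abs_of_pos (by positivity)]
  have h1 : c n ^ ((a : ℕ) + 1) * ‖x a b‖ * (c n ^ ((b : ℕ) + 1))⁻¹
      ≤ opNorm (dMat c n * x * dMatInv c n) := by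
    rw [← hnorm]; exact entry_le_opNorm _ _ _
  have hsplit : c n ^ ((a:ℕ)+1) = c n ^ ((b:ℕ)+1) * c n ^ ((a:ℕ)-(b:ℕ)) := by
    rw [← pow_add]
    congr 1
    omega
  rw [inv_pow, ← div_eq_mul_inv, le_div_iff₀ (by positivity)]
  calc ‖x a b‖ * c n ^ ((a:ℕ)-(b:ℕ))
      = c n ^ ((a:ℕ)+1) * ‖x a b‖ * (c n ^ ((b:ℕ)+1))⁻¹ := by
        rw [hsplit]
        field_simp
    _ ≤ _ := h1


lemma lowerT_le (c : ℕ → ℝ) {n : ℕ} (hc2 : 2 ≤ c n) (x : Matrix (Fin n) (Fin n) ℂ) :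
    opNorm (lowerT x) ≤ opNorm (dMat c n * x * dMatInv c n) := by
  have hc1 : 1 < c n := by linarith
  set N := opNorm (dMat c n * x * dMatInv c n) with hN
  have hN0 : 0 ≤ N := opNorm_nonneg _
  have hci : (c n)⁻¹ ≤ 2⁻¹ := by
    rw [inv_le_inv₀ (by linarith) (by norm_num)]; exact hc2
  have hci0 : 0 ≤ (c n)⁻¹ := by positivity
  apply schur_bound _ _ hN0
  · intro a
    calc ∑ b, ‖lowerT x a b‖
        ≤ ∑ b : Fin n, (if (b : ℕ) < (a : ℕ) then N * (c n)⁻¹ ^ ((a:ℕ) - (b:ℕ)) else 0) := by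
          apply Finset.sum_le_sum
          intro b _
          by_cases hb : (b : ℕ) < (a : ℕ)
          · rw [if_pos hb]
            have : lowerT x a b = x a b := by
              simp only [lowerT, Matrix.of_apply]
              exact if_pos hb
            rw [this]
            exact (entry_bound_low c hc1 x a b hb).trans (le_of_eq rfl)
          · have : lowerT x a b = 0 := by
              simp only [lowerT, Matrix.of_apply]
              exact if_neg hb
            rw [this, if_neg hb, norm_zero]
      _ = N * ∑ b ∈ Finset.univ.filter (fun b : Fin n => (b : ℕ) < (a : ℕ)),
            (c n)⁻¹ ^ ((a:ℕ) - (b:ℕ)) := by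
          rw [Finset.sum_filter, Finset.mul_sum]
          apply Finset.sum_congr rfl
          intro b _
          split_ifs <;> simp
      _ ≤ N * (2 * (c n)⁻¹ ^ 1) := by
          apply mul_le_mul_of_nonneg_left _ hN0
          apply geom_helper hc2 _ (fun b : Fin n => (a:ℕ) - (b:ℕ))
          · intro b₁ h₁ b₂ h₂ h
            simp only [Finset.coe_filter, Set.mem_setOf_eq, Finset.mem_univ, true_and] at h₁ h₂
            simp only at h
            exact Fin.ext (by omega)
          · intro b hb
            simp only [Finset.mem_filter] at hb
            omega
      _ ≤ N := by nlinarith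
  · intro b
    calc ∑ a, ‖lowerT x a b‖
        ≤ ∑ a : Fin n, (if (b : ℕ) < (a : ℕ) then N * (c n)⁻¹ ^ ((a:ℕ) - (b:ℕ)) else 0) := by
          apply Finset.sum_le_sum
          intro a _
          by_cases hb : (b : ℕ) < (a : ℕ)
          · rw [if_pos hb]
            have : lowerT x a b = x a b := by
              simp only [lowerT, Matrix.of_apply]
              exact if_pos hb
            rw [this]
            exact (entry_bound_low c hc1 x a b hb).trans (le_of_eq rfl)
          · have : lowerT x a b = 0 := by
              simp only [lowerT, Matrix.of_apply]
              exact if_neg hb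
            rw [this, if_neg hb, norm_zero]
      _ = N * ∑ a ∈ Finset.univ.filter (fun a : Fin n => (b : ℕ) < (a : ℕ)),
            (c n)⁻¹ ^ ((a:ℕ) - (b:ℕ)) := by
          rw [Finset.sum_filter, Finset.mul_sum]
          apply Finset.sum_congr rfl
          intro a _
          split_ifs <;> simp
      _ ≤ N * (2 * (c n)⁻¹ ^ 1) := by
          apply mul_le_mul_of_nonneg_left _ hN0
          apply geom_helper hc2 _ (fun a : Fin n => (a:ℕ) - (b:ℕ))
          · intro a₁ h₁ a₂ h₂ h
            simp only [Finset.coe_filter, Set.mem_setOf_eq, Finset.mem_univ, true_and] at h₁ h₂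
            simp only at h
            exact Fin.ext (by omega)
          · intro a ha
            simp only [Finset.mem_filter] at ha
            omega
      _ ≤ N := by nlinarith

lemma upperT_eq_sub {n : ℕ} (x : Matrix (Fin n) (Fin n) ℂ) :
    upperT x = x - lowerT x := by
  ext a b
  simp only [upperT, lowerT, Matrix.of_apply, Matrix.sub_apply]
  rcases le_or_gt a b with h | h
  · rw [if_pos h, if_neg (not_lt.mpr h), sub_zero]
  · rw [if_neg (not_le.mpr h), if_pos h, sub_self]

lemma upperT_le (c : ℕ → ℝ) {n : ℕ} (hc2 : 2 ≤ c n) (x : Matrix (Fin n) (Fin n) ℂ) :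
    opNorm (upperT x) ≤ 2 * pnorm c n x := by
  rw [upperT_eq_sub]
  calc opNorm (x - lowerT x) ≤ opNorm x + opNorm (lowerT x) := opNorm_sub_le _ _
    _ ≤ pnorm c n x + pnorm c n x := by
        apply add_le_add
        · exact le_max_left _ _
        · exact (lowerT_le c hc2 x).trans (le_max_right _ _)
    _ = 2 * pnorm c n x := by ring

lemma Ynorm (c : ℕ → ℝ) {n k : ℕ} (hk1 : 1 ≤ k) (hkn : k ≤ n) (hc2 : 2 ≤ c n)
    (T : Matrix (Fin n) (Fin n) ℂ) (P : ℝ) (hP : 0 ≤ P)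
    (hd : opNorm (dMat c n * T * dMatInv c n) ≤ P)
    (Y : Matrix (Fin n) (Fin n) ℂ)
    (hY : ∀ a b, Y a b = 0 ∨
      ((b : ℕ) < (a : ℕ) + ⌈(n : ℝ) / k⌉₊ ∧ Y a b = (T * umat n k) a b)) :
    opNorm Y ≤ 2 * P / (Eset n k).card := by
  have hc1 : 1 < c n := by linarith
  set t := ⌈(n : ℝ) / k⌉₊ with htdef
  set μ := (Eset n k).card with hμdef
  have hμ1 : 1 ≤ μ := by
    have h2 := Eset_card_lb (n := n) (k := k) hk1 hkn
    have h1 : 1 ≤ n / k := (Nat.one_le_div_iff (by omega)).mpr hkn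
    omega
  have hμ0 : (0:ℝ) < (μ : ℝ) := by exact_mod_cast hμ1
  have hci : (c n)⁻¹ ≤ 2⁻¹ := by
    rw [inv_le_inv₀ (by linarith) (by norm_num)]; exact hc2
  have hci0 : 0 ≤ (c n)⁻¹ := by positivity
  have hB0 : 0 ≤ 2 * P / (μ : ℝ) := by positivity
  have hentry : ∀ a b : Fin n, ‖Y a b‖ ≤
      (μ:ℝ)⁻¹ * ∑ i ∈ Eset n k, (if i ≤ (b : ℕ) ∧ (b : ℕ) < (a : ℕ) + t
        then P * (c n)⁻¹ ^ ((a:ℕ) + i - (b:ℕ)) else 0) := by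
    intro a b
    have hnn : 0 ≤ (μ:ℝ)⁻¹ * ∑ i ∈ Eset n k, (if i ≤ (b : ℕ) ∧ (b : ℕ) < (a : ℕ) + t
        then P * (c n)⁻¹ ^ ((a:ℕ) + i - (b:ℕ)) else 0) := by
      apply mul_nonneg (by positivity)
      apply Finset.sum_nonneg
      intro i _
      split_ifs
      · positivity
      · exact le_refl 0
    rcases hY a b with h0 | ⟨hbt, heq⟩
    · rw [h0, norm_zero]; exact hnn
    · rw [heq]
      refine (Tu_entry_bound hkn T a b).trans ?_
      apply mul_le_mul_of_nonneg_left _ (by positivity)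
      apply Finset.sum_le_sum
      intro i hi
      have hti : t ≤ i := mem_Eset_le hi
      by_cases hib : i ≤ (b:ℕ)
      · rw [if_pos hib, if_pos ⟨hib, hbt⟩]
        have hvm : (((⟨(b:ℕ) - i, lt_of_le_of_lt (Nat.sub_le _ _) b.isLt⟩ : Fin n)) : ℕ)
            = (b:ℕ) - i := rfl
        have hlt : (((⟨(b:ℕ) - i, lt_of_le_of_lt (Nat.sub_le _ _) b.isLt⟩ : Fin n)) : ℕ)
            < (a:ℕ) := by rw [hvm]; omega
        refine (entry_bound_low c hc1 T a _ hlt).trans ?_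
        have hexp : (a:ℕ) - (((⟨(b:ℕ) - i, lt_of_le_of_lt (Nat.sub_le _ _) b.isLt⟩ : Fin n)) : ℕ)
            = (a:ℕ) + i - (b:ℕ) := by rw [hvm]; omega
        rw [hexp]
        exact mul_le_mul_of_nonneg_right hd (by positivity)
      · rw [if_neg hib, if_neg (by tauto)]
  apply schur_bound _ _ hB0
  · intro a
    calc ∑ b : Fin n, ‖Y a b‖
        ≤ ∑ b : Fin n, ((μ:ℝ)⁻¹ * ∑ i ∈ Eset n k, (if i ≤ (b : ℕ) ∧ (b : ℕ) < (a : ℕ) + t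
            then P * (c n)⁻¹ ^ ((a:ℕ) + i - (b:ℕ)) else 0)) :=
          Finset.sum_le_sum fun b _ => hentry a b
      _ = (μ:ℝ)⁻¹ * ∑ i ∈ Eset n k, ∑ b : Fin n, (if i ≤ (b : ℕ) ∧ (b : ℕ) < (a : ℕ) + t
            then P * (c n)⁻¹ ^ ((a:ℕ) + i - (b:ℕ)) else 0) := by
          rw [← Finset.mul_sum, Finset.sum_comm]
      _ ≤ (μ:ℝ)⁻¹ * ∑ i ∈ Eset n k, (P * (2 * (c n)⁻¹ ^ (i - t + 1))) := by
          apply mul_le_mul_of_nonneg_left _ (by positivity)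
          apply Finset.sum_le_sum
          intro i hi
          have hti : t ≤ i := mem_Eset_le hi
          calc ∑ b : Fin n, (if i ≤ (b : ℕ) ∧ (b : ℕ) < (a : ℕ) + t
                then P * (c n)⁻¹ ^ ((a:ℕ) + i - (b:ℕ)) else 0)
              = P * ∑ b ∈ Finset.univ.filter
                  (fun b : Fin n => i ≤ (b : ℕ) ∧ (b : ℕ) < (a : ℕ) + t),
                  (c n)⁻¹ ^ ((a:ℕ) + i - (b:ℕ)) := by
                rw [Finset.sum_filter, Finset.mul_sum]
                apply Finset.sum_congr rfl
                intro b _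
                split_ifs <;> simp
            _ ≤ P * (2 * (c n)⁻¹ ^ (i - t + 1)) := by
                apply mul_le_mul_of_nonneg_left _ hP
                apply geom_helper hc2 _ (fun b : Fin n => (a:ℕ) + i - (b:ℕ))
                · intro b₁ h₁ b₂ h₂ hh
                  simp only [Finset.coe_filter, Set.mem_setOf_eq, Finset.mem_univ,
                    true_and] at h₁ h₂
                  simp only at hh
                  exact Fin.ext (by omega)
                · intro b hb
                  simp only [Finset.mem_filter] at hb
                  omega
      _ ≤ (μ:ℝ)⁻¹ * (2 * P) := by
          apply mul_le_mul_of_nonneg_left _ (by positivity)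
          calc ∑ i ∈ Eset n k, (P * (2 * (c n)⁻¹ ^ (i - t + 1)))
              = 2 * P * ∑ i ∈ Eset n k, (c n)⁻¹ ^ (i - t + 1) := by
                rw [Finset.mul_sum]
                apply Finset.sum_congr rfl
                intro i _
                ring
            _ ≤ 2 * P * (2 * (c n)⁻¹ ^ 1) := by
                apply mul_le_mul_of_nonneg_left _ (by positivity)
                apply geom_helper hc2 _ (fun i => i - t + 1)
                · intro i₁ h₁ i₂ h₂ hh
                  simp only [Finset.mem_coe] at h₁ h₂
                  have hm₁ := mem_Eset_le h₁
                  have hm₂ := mem_Eset_le h₂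
                  simp only at hh
                  omega
                · intro i _
                  omega
            _ ≤ 2 * P := by nlinarith
      _ = 2 * P / (μ:ℝ) := by
          rw [div_eq_mul_inv]
          ring
  · intro b
    calc ∑ a : Fin n, ‖Y a b‖
        ≤ ∑ a : Fin n, ((μ:ℝ)⁻¹ * ∑ i ∈ Eset n k, (if i ≤ (b : ℕ) ∧ (b : ℕ) < (a : ℕ) + t
            then P * (c n)⁻¹ ^ ((a:ℕ) + i - (b:ℕ)) else 0)) :=
          Finset.sum_le_sum fun a _ => hentry a b
      _ = (μ:ℝ)⁻¹ * ∑ i ∈ Eset n k, ∑ a : Fin n, (if i ≤ (b : ℕ) ∧ (b : ℕ) < (a : ℕ) + t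
            then P * (c n)⁻¹ ^ ((a:ℕ) + i - (b:ℕ)) else 0) := by
          rw [← Finset.mul_sum, Finset.sum_comm]
      _ ≤ (μ:ℝ)⁻¹ * ∑ i ∈ Eset n k, (P * (2 * (c n)⁻¹ ^ (i - t + 1))) := by
          apply mul_le_mul_of_nonneg_left _ (by positivity)
          apply Finset.sum_le_sum
          intro i hi
          have hti : t ≤ i := mem_Eset_le hi
          calc ∑ a : Fin n, (if i ≤ (b : ℕ) ∧ (b : ℕ) < (a : ℕ) + t
                then P * (c n)⁻¹ ^ ((a:ℕ) + i - (b:ℕ)) else 0)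
              = P * ∑ a ∈ Finset.univ.filter
                  (fun a : Fin n => i ≤ (b : ℕ) ∧ (b : ℕ) < (a : ℕ) + t),
                  (c n)⁻¹ ^ ((a:ℕ) + i - (b:ℕ)) := by
                rw [Finset.sum_filter, Finset.mul_sum]
                apply Finset.sum_congr rfl
                intro a _
                split_ifs <;> simp
            _ ≤ P * (2 * (c n)⁻¹ ^ (i - t + 1)) := by
                apply mul_le_mul_of_nonneg_left _ hP
                apply geom_helper hc2 _ (fun a : Fin n => (a:ℕ) + i - (b:ℕ))
                · intro a₁ h₁ a₂ h₂ hh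
                  simp only [Finset.coe_filter, Set.mem_setOf_eq, Finset.mem_univ,
                    true_and] at h₁ h₂
                  simp only at hh
                  exact Fin.ext (by omega)
                · intro a ha
                  simp only [Finset.mem_filter] at ha
                  omega
      _ ≤ (μ:ℝ)⁻¹ * (2 * P) := by
          apply mul_le_mul_of_nonneg_left _ (by positivity)
          calc ∑ i ∈ Eset n k, (P * (2 * (c n)⁻¹ ^ (i - t + 1)))
              = 2 * P * ∑ i ∈ Eset n k, (c n)⁻¹ ^ (i - t + 1) := by
                rw [Finset.mul_sum]
                apply Finset.sum_congr rfl
                intro i _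
                ring
            _ ≤ 2 * P * (2 * (c n)⁻¹ ^ 1) := by
                apply mul_le_mul_of_nonneg_left _ (by positivity)
                apply geom_helper hc2 _ (fun i => i - t + 1)
                · intro i₁ h₁ i₂ h₂ hh
                  simp only [Finset.mem_coe] at h₁ h₂
                  have hm₁ := mem_Eset_le h₁
                  have hm₂ := mem_Eset_le h₂
                  simp only at hh
                  omega
                · intro i _
                  omega
            _ ≤ 2 * P := by nlinarith
      _ = 2 * P / (μ:ℝ) := by
          rw [div_eq_mul_inv]
          ring

lemma supp_mul {n u v : ℕ} (X Y : Matrix (Fin n) (Fin n) ℂ)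
    (hX : ∀ a b : Fin n, (b : ℕ) < (a : ℕ) + u → X a b = 0)
    (hY : ∀ a b : Fin n, (b : ℕ) < (a : ℕ) + v → Y a b = 0) :
    ∀ a b : Fin n, (b : ℕ) < (a : ℕ) + (u + v) → (X * Y) a b = 0 := by
  intro a b hab
  rw [Matrix.mul_apply]
  apply Finset.sum_eq_zero
  intro d _
  by_cases hd : (d : ℕ) < (a : ℕ) + u
  · rw [hX a d hd, zero_mul]
  · rw [hY d b (by omega), mul_zero]

lemma expandPow {n t k : ℕ} (hnkt : n ≤ k * t) (hk1 : 1 ≤ k)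
    (A B : Matrix (Fin n) (Fin n) ℂ)
    (hA : ∀ a b : Fin n, (b : ℕ) < (a : ℕ) + t → A a b = 0)
    (hB : ∀ a b : Fin n, (b : ℕ) < (a : ℕ) → B a b = 0)
    (α β : ℝ) (hα0 : 0 ≤ α) (hβ0 : 0 ≤ β)
    (hα : opNorm A ≤ α) (hβ : opNorm B ≤ β) (r : ℕ) :
    opNorm ((A + B) ^ r) ≤ ∑ s ∈ Finset.range k, (r.choose s : ℝ) * α ^ s * β ^ (r - s) := by
  have main : ∀ r : ℕ, ∃ X : ℕ → Matrix (Fin n) (Fin n) ℂ,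
      ((A + B) ^ r = ∑ s ∈ Finset.range k, X s) ∧
      (∀ s, ∀ a b : Fin n, (b : ℕ) < (a : ℕ) + s * t → X s a b = 0) ∧
      (∀ s, opNorm (X s) ≤ (r.choose s : ℝ) * α ^ s * β ^ (r - s)) := by
    intro r
    induction r with
    | zero =>
      refine ⟨fun s => if s = 0 then 1 else 0, ?_, ?_, ?_⟩
      · dsimp only
        rw [pow_zero]
        rw [Finset.sum_eq_single 0]
        · rw [if_pos rfl]
        · intro s _ hs; rw [if_neg hs]
        · intro h; exact absurd (Finset.mem_range.mpr (by omega)) h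
      · intro s a b hab
        dsimp only
        by_cases hs : s = 0
        · subst hs
          rw [if_pos rfl]
          apply Matrix.one_apply_ne
          intro h
          subst h
          omega
        · rw [if_neg hs]; rfl
      · intro s
        dsimp only
        by_cases hs : s = 0
        · subst hs
          rw [if_pos rfl]
          simp only [Nat.choose_self, Nat.cast_one, pow_zero, Nat.zero_sub, one_mul, mul_one]
          apply schur_bound _ _ zero_le_one
          · intro a
            simp [Matrix.one_apply, apply_ite (fun z : ℂ => ‖z‖)]
          · intro b
            simp [Matrix.one_apply, apply_ite (fun z : ℂ => ‖z‖)]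
        · rw [if_neg hs, opNorm_zero]
          positivity
    | succ r ih =>
      obtain ⟨X, hsum, hsupp, hnorm⟩ := ih
      refine ⟨fun s => (if s = 0 then 0 else X (s - 1) * A) + X s * B, ?_, ?_, ?_⟩
      · dsimp only
        have hlast : X (k - 1) * A = 0 := by
          ext a b
          rw [Matrix.zero_apply]
          apply supp_mul (u := (k-1) * t) (v := t) _ _ (hsupp (k-1)) hA
          have hb : (b : ℕ) < n := b.isLt
          have : (k - 1) * t + t = k * t := by
            cases k with
            | zero => omega
            | succ k' => simp [Nat.succ_sub_one]; ring
          omega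
        have h1 : ∑ s ∈ Finset.range k, (if s = 0 then 0 else X (s - 1) * A)
            = ∑ s ∈ Finset.range k, X s * A := by
          obtain ⟨k', rfl⟩ : ∃ k', k = k' + 1 := ⟨k - 1, by omega⟩
          rw [Finset.sum_range_succ' (fun s => if s = 0 then 0 else X (s - 1) * A) k',
            Finset.sum_range_succ (fun s => X s * A) k']
          have hz : X k' * A = 0 := hlast
          rw [hz, add_zero]
          have hterm : ∀ x : ℕ,
              (if x + 1 = 0 then (0 : Matrix (Fin n) (Fin n) ℂ) else X (x + 1 - 1) * A)
                = X x * A := by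
            intro x
            rw [if_neg (Nat.succ_ne_zero x), Nat.add_sub_cancel]
          simp [hterm]
        rw [Finset.sum_add_distrib, h1, ← Finset.sum_mul, ← Finset.sum_mul, ← hsum]
        rw [pow_succ, mul_add]
      · intro s a b hab
        dsimp only
        rw [Matrix.add_apply]
        have h2 : (X s * B) a b = 0 := by
          apply supp_mul (u := s * t) (v := 0) _ _ (hsupp s) ?_ a b (by omega)
          intro a' b' h'
          exact hB a' b' (by omega)
        rw [h2, add_zero]
        by_cases hs : s = 0
        · subst hs; rfl
        · rw [if_neg hs]
          obtain ⟨s', rfl⟩ : ∃ s', s = s' + 1 := ⟨s - 1, by omega⟩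
          apply supp_mul (u := s' * t) (v := t) _ _ (hsupp s') hA a b ?_
          have hst : s' * t + t = (s' + 1) * t := by ring
          omega
      · intro s
        dsimp only
        have hXsB : opNorm (X s * B) ≤ ((r.choose s : ℝ) * α ^ s * β ^ (r - s)) * β := by
          refine (opNorm_mul_le _ _).trans ?_
          apply mul_le_mul (hnorm s) hβ (opNorm_nonneg _)
          positivity
        by_cases hs : s = 0
        · subst hs
          rw [if_pos rfl, zero_add]
          refine hXsB.trans ?_
          simp only [Nat.choose_zero_right, Nat.cast_one, pow_zero, Nat.sub_zero,
            one_mul, mul_one]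
          rw [← pow_succ]
        · obtain ⟨s', rfl⟩ : ∃ s', s = s' + 1 := ⟨s - 1, by omega⟩
          rw [if_neg hs, Nat.add_sub_cancel]
          refine (opNorm_add_le _ _).trans ?_
          have hXA : opNorm (X s' * A) ≤ ((r.choose s' : ℝ) * α ^ s' * β ^ (r - s')) * α := by
            refine (opNorm_mul_le _ _).trans ?_
            apply mul_le_mul (hnorm s') hα (opNorm_nonneg _)
            positivity
          have e1 : ((r.choose s' : ℝ) * α ^ s' * β ^ (r - s')) * α
              = (r.choose s' : ℝ) * α ^ (s' + 1) * β ^ (r - s') := by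
            rw [pow_succ]; ring
          have e2 : ((r.choose (s' + 1) : ℝ) * α ^ (s' + 1) * β ^ (r - (s' + 1))) * β
              ≤ (r.choose (s' + 1) : ℝ) * α ^ (s' + 1) * β ^ (r - s') := by
            rcases le_or_gt (s' + 1) r with hle | hlt
            · apply le_of_eq
              have hββ : β ^ (r - (s' + 1)) * β = β ^ (r - s') := by
                rw [← pow_succ]
                congr 1
                omega
              calc (r.choose (s' + 1) : ℝ) * α ^ (s' + 1) * β ^ (r - (s' + 1)) * β
                  = (r.choose (s' + 1) : ℝ) * α ^ (s' + 1) * (β ^ (r - (s' + 1)) * β) := by ring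
                _ = (r.choose (s' + 1) : ℝ) * α ^ (s' + 1) * β ^ (r - s') := by rw [hββ]
            · rw [Nat.choose_eq_zero_of_lt hlt]
              simp
          have e3 : (r + 1).choose (s' + 1) = r.choose s' + r.choose (s' + 1) :=
            Nat.choose_succ_succ r s'
          calc opNorm (X s' * A) + opNorm (X (s' + 1) * B)
              ≤ (r.choose s' : ℝ) * α ^ (s' + 1) * β ^ (r - s')
                + ((r.choose (s' + 1) : ℝ) * α ^ (s' + 1) * β ^ (r - (s' + 1))) * β := by
                apply add_le_add (hXA.trans (le_of_eq e1)) hXsB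
            _ ≤ (r.choose s' : ℝ) * α ^ (s' + 1) * β ^ (r - s')
                + (r.choose (s' + 1) : ℝ) * α ^ (s' + 1) * β ^ (r - s') := by
                exact add_le_add (le_refl _) e2
            _ = (((r + 1).choose (s' + 1) : ℝ)) * α ^ (s' + 1) * β ^ (r - s') := by
                rw [e3]
                push_cast
                ring
            _ = (((r + 1).choose (s' + 1) : ℝ)) * α ^ (s' + 1) * β ^ ((r + 1) - (s' + 1)) := by
                rw [(by omega : (r + 1) - (s' + 1) = r - s')]
  obtain ⟨X, hsum, hsupp, hnorm⟩ := main r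
  rw [hsum]
  calc opNorm (∑ s ∈ Finset.range k, X s) ≤ ∑ s ∈ Finset.range k, opNorm (X s) := by
        classical
        induction (Finset.range k) using Finset.induction_on with
        | empty => simp [opNorm_zero]
        | insert a s hx ih2 =>
          rw [Finset.sum_insert hx, Finset.sum_insert hx]
          exact (opNorm_add_le _ _).trans (add_le_add (le_refl _) ih2)
    _ ≤ ∑ s ∈ Finset.range k, (r.choose s : ℝ) * α ^ s * β ^ (r - s) :=
        Finset.sum_le_sum fun s _ => hnorm s

lemma opNorm_le_pnorm (c : ℕ → ℝ) {n : ℕ} (x : Matrix (Fin n) (Fin n) ℂ) :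
    opNorm x ≤ pnorm c n x := by
  unfold pnorm; exact le_max_left _ _

lemma opNormd_le_pnorm (c : ℕ → ℝ) {n : ℕ} (x : Matrix (Fin n) (Fin n) ℂ) :
    opNorm (dMat c n * x * dMatInv c n) ≤ pnorm c n x := by
  unfold pnorm; exact le_max_right _ _

lemma pnorm_nonneg (c : ℕ → ℝ) {n : ℕ} (x : Matrix (Fin n) (Fin n) ℂ) :
    0 ≤ pnorm c n x :=
  le_trans (opNorm_nonneg x) (opNorm_le_pnorm c x)

lemma pnorm_neg (c : ℕ → ℝ) {n : ℕ} (x : Matrix (Fin n) (Fin n) ℂ) :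
    pnorm c n (-x) = pnorm c n x := by
  unfold pnorm
  rw [mul_neg, neg_mul, opNorm_neg, opNorm_neg]

/-- Let `0 ≠ T = (T_n) ∈ A` and `ε > 0`.  Then there exist `k, m ∈ ℕ`
such that for every integer `r ≥ 0` and every `n ≥ max{k, m}`:
`‖(Δ̄_U T_n)^r‖ ≤ Σ_{s=0}^{k−1} binom(r,s) (2 p(T))^r ε^{r−s}`. -/
theorem stmt10 (c : ℕ → ℝ) (hmono : StrictMono c) (hone : ∀ n, 1 < c n)
    (hunbdd : ∀ M : ℝ, ∃ n, M < c n)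
    (T : ∀ n, Matrix (Fin n) (Fin n) ℂ) (hT : memA c T) (hT0 : T ≠ 0)
    (ε : ℝ) (hε : 0 < ε) :
    ∃ k m : ℕ, ∀ r : ℕ, ∀ n : ℕ, max k m ≤ n →
      opNorm ((upperT (T n)) ^ r) ≤
        ∑ s ∈ Finset.range k, (r.choose s : ℝ) * (2 * pA c T) ^ r * ε ^ (r - s) := by
  classical
  set P := pA c T with hPdef
  obtain ⟨M0, hM0⟩ := hT.1
  have hbdd : BddAbove (Set.range fun j => pnorm c j (T j)) := by
    refine ⟨M0, ?_⟩
    rintro y ⟨j, rfl⟩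
    exact hM0 j
  have hPle : ∀ j, pnorm c j (T j) ≤ P := fun j => le_ciSup hbdd j
  have hP0 : 0 < P := by
    obtain ⟨j, hj⟩ : ∃ j, T j ≠ 0 := by
      by_contra h
      push_neg at h
      exact hT0 (funext h)
    have h1 : 0 < opNorm (T j) := by
      rcases (opNorm_nonneg (T j)).lt_or_eq with h | h
      · exact h
      · exact absurd ((opNorm_eq_zero_iff _).mp h.symm) hj
    calc (0:ℝ) < opNorm (T j) := h1
      _ ≤ pnorm c j (T j) := opNorm_le_pnorm c _
      _ ≤ P := hPle j
  set ε' := min ε (1/2) with hε'def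
  have hε'0 : 0 < ε' := lt_min hε (by norm_num)
  have hε'le : ε' ≤ ε := min_le_left _ _
  have hε'half : ε' ≤ 1/2 := min_le_right _ _
  obtain ⟨K, hK⟩ := hT.2 (ε' * P / 2) (by positivity)
  set k := max K 1 with hkdef
  have hk1 : 1 ≤ k := le_max_right _ _
  obtain ⟨n₀, hn₀⟩ := hunbdd 2
  set M := ⌈2 / ε'⌉₊ with hMdef
  set m := max n₀ (k * M + k) with hmdef
  refine ⟨k, m, ?_⟩
  intro r n hn
  have hkn : k ≤ n := le_trans (le_max_left _ _) hn
  have hn1 : 1 ≤ n := le_trans hk1 hkn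
  have hmn : m ≤ n := le_trans (le_max_right _ _) hn
  have hcn2 : 2 ≤ c n := by
    have h1 : n₀ ≤ n := le_trans (le_max_left _ _) hmn
    exact le_trans (le_of_lt hn₀) (hmono.monotone h1)
  have hcn1 : 1 < c n := by linarith
  -- size of the averaging set
  set μ := (Eset n k).card with hμdef
  have hμM : M ≤ μ := by
    have hkM : k * M + k ≤ n := le_trans (le_max_right _ _) hmn
    have h2 : M * k ≤ n := by
      calc M * k = k * M := Nat.mul_comm _ _
        _ ≤ n := by omega
    exact le_trans ((Nat.le_div_iff_mul_le (by omega)).mpr h2) (Eset_card_lb hk1 hkn)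
  have hμR : 2 / ε' ≤ (μ:ℝ) := by
    calc 2 / ε' ≤ (M:ℝ) := Nat.le_ceil _
      _ ≤ (μ:ℝ) := Nat.cast_le.mpr hμM
  have hμ0 : (0:ℝ) < (μ:ℝ) := lt_of_lt_of_le (by positivity) hμR
  have hsmall : 2 * P / (μ:ℝ) ≤ ε' * P := by
    rw [div_le_iff₀ hμ0]
    have h1 : (ε' * P) * (2 / ε') ≤ (ε' * P) * (μ:ℝ) :=
      mul_le_mul_of_nonneg_left hμR (by positivity)
    have h2 : (ε' * P) * (2 / ε') = 2 * P := by
      field_simp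
    nlinarith
  -- memA estimate
  have hTu : pnorm c n (T n * umat n k - T n) ≤ ε' * P / 2 := by
    have h := hK k (le_max_left _ _) n
    have h2 := pnorm_nonneg c (umat n k * T n - T n)
    linarith
  set t := ⌈(n:ℝ)/k⌉₊ with htdef
  have ht1 : 1 ≤ t := ceil_pos_of hk1 hn1
  set Tu := T n * umat n k with hTudef
  set A := Matrix.of (fun a b : Fin n => if (a:ℕ) + t ≤ (b:ℕ) then Tu a b else 0) with hAdef
  set B := upperT (T n) - A with hBdef
  set Y2 := Matrix.of (fun a b : Fin n =>
    if (a:ℕ) ≤ (b:ℕ) ∧ (b:ℕ) < (a:ℕ) + t then Tu a b else 0) with hY2def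
  have hABsum : upperT (T n) = A + B := by rw [hBdef]; abel
  have hAsupp : ∀ a b : Fin n, (b:ℕ) < (a:ℕ) + t → A a b = 0 := by
    intro a b h
    rw [hAdef]
    exact if_neg (by omega)
  have hBsupp : ∀ a b : Fin n, (b:ℕ) < (a:ℕ) → B a b = 0 := by
    intro a b h
    rw [hBdef, Matrix.sub_apply, hAsupp a b (by omega), sub_zero]
    simp only [upperT, Matrix.of_apply]
    rw [if_neg]
    intro hab
    rw [Fin.le_def] at hab
    omega
  -- norm estimates
  have hTuT : opNorm (Tu - T n) ≤ ε' * P / 2 :=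
    le_trans (opNorm_le_pnorm c _) hTu
  have hTnorm : opNorm (T n) ≤ P := le_trans (opNorm_le_pnorm c _) (hPle n)
  have hTunorm : opNorm Tu ≤ P + ε' * P / 2 := by
    have he : Tu = T n + (Tu - T n) := by abel
    rw [he]
    exact (opNorm_add_le _ _).trans (add_le_add hTnorm hTuT)
  have hdT : opNorm (dMat c n * T n * dMatInv c n) ≤ P :=
    le_trans (opNormd_le_pnorm c _) (hPle n)
  have hY1 : opNorm (Tu - A) ≤ 2 * P / (μ:ℝ) := by
    apply Ynorm c hk1 hkn hcn2 (T n) P (le_of_lt hP0) hdT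
    intro a b
    by_cases h : (a:ℕ) + t ≤ (b:ℕ)
    · left
      rw [Matrix.sub_apply, hAdef, Matrix.of_apply, if_pos h, hTudef, sub_self]
    · right
      refine ⟨by omega, ?_⟩
      rw [Matrix.sub_apply, hAdef, Matrix.of_apply, if_neg h, sub_zero, hTudef]
  have hY2n : opNorm Y2 ≤ 2 * P / (μ:ℝ) := by
    apply Ynorm c hk1 hkn hcn2 (T n) P (le_of_lt hP0) hdT
    intro a b
    by_cases h : (a:ℕ) ≤ (b:ℕ) ∧ (b:ℕ) < (a:ℕ) + t
    · right
      refine ⟨h.2, ?_⟩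
      rw [hY2def, Matrix.of_apply, if_pos h, hTudef]
    · left
      rw [hY2def, Matrix.of_apply, if_neg h]
  have hAnorm : opNorm A ≤ 2 * P := by
    have he : A = Tu - (Tu - A) := by abel
    rw [he]
    calc opNorm (Tu - (Tu - A)) ≤ opNorm Tu + opNorm (Tu - A) := opNorm_sub_le _ _
      _ ≤ (P + ε' * P / 2) + 2 * P / (μ:ℝ) := add_le_add hTunorm hY1
      _ ≤ 2 * P := by nlinarith
  have hBdecomp : B = upperT (T n - Tu) + Y2 := by
    rw [hBdef, hY2def, hAdef]
    ext a b
    simp only [Matrix.sub_apply, Matrix.add_apply, upperT, Matrix.of_apply, Fin.le_def]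
    split_ifs <;> first | ring1 | (exfalso; omega)
  have hBnorm : opNorm B ≤ 2 * P * ε' := by
    rw [hBdecomp]
    have h1 : opNorm (upperT (T n - Tu)) ≤ ε' * P := by
      refine (upperT_le c hcn2 _).trans ?_
      have he : T n - Tu = -(Tu - T n) := by abel
      rw [he, pnorm_neg]
      linarith
    have h2 : opNorm Y2 ≤ ε' * P := le_trans hY2n hsmall
    calc opNorm (upperT (T n - Tu) + Y2) ≤ opNorm (upperT (T n - Tu)) + opNorm Y2 :=
          opNorm_add_le _ _
      _ ≤ ε' * P + ε' * P := add_le_add h1 h2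
      _ = 2 * P * ε' := by ring
  have hnkt : n ≤ k * t := n_le_k_mul_ceil hk1
  have hfin := expandPow hnkt hk1 A B hAsupp hBsupp (2*P) (2*P*ε')
    (by positivity) (by positivity) hAnorm hBnorm r
  rw [hABsum]
  refine hfin.trans ?_
  apply Finset.sum_le_sum
  intro s _
  rcases le_or_gt s r with hsr | hsr
  · have hsplit : (2*P)^s * (2*P*ε')^(r-s) = (2*P)^r * ε'^(r-s) := by
      rw [mul_pow (2*P) ε' (r-s), ← mul_assoc, ← pow_add, (by omega : s + (r - s) = r)]
    calc (r.choose s : ℝ) * (2*P)^s * (2*P*ε')^(r-s)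
        = (r.choose s : ℝ) * ((2*P)^s * (2*P*ε')^(r-s)) := by ring
      _ = (r.choose s : ℝ) * ((2*P)^r * ε'^(r-s)) := by rw [hsplit]
      _ ≤ (r.choose s : ℝ) * ((2*P)^r * ε^(r-s)) := by
          apply mul_le_mul_of_nonneg_left _ (Nat.cast_nonneg _)
          exact mul_le_mul_of_nonneg_left
            (pow_le_pow_left₀ (le_of_lt hε'0) hε'le _) (by positivity)
      _ = (r.choose s : ℝ) * (2*P)^r * ε^(r-s) := by ring
  · rw [Nat.choose_eq_zero_of_lt hsr]
    simp


end
end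

section
/- Let 1 ≤ k ≤ n be integers and let U₁, U₂, …, U_k ∈ M_n(ℂ) be upper triangular matrices. Then the product (u_{n,k} U₁)(u_{n,k} U₂)⋯(u_{n,k} U_k) = 0. (Multiplication of an upper triangular matrix by u_{n,k} shifts its support by at least n/k superdiagonals, so after k such multiplications the result is zero.) -/
noncomputable section

/-- `M` vanishes below the `d`-th superdiagonal. -/
def Shifted (n d : ℕ) (M : Matrix (Fin n) (Fin n) ℂ) : Prop :=
  ∀ a b : Fin n, (b : ℕ) < (a : ℕ) + d → M a b = 0

lemma shifted_mono {n d e : ℕ} (h : d ≤ e) {M : Matrix (Fin n) (Fin n) ℂ}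
    (hM : Shifted n e M) : Shifted n d M := fun a b hb =>
  hM a b (lt_of_lt_of_le hb (by omega))

lemma shifted_mul {n d e : ℕ} {M N : Matrix (Fin n) (Fin n) ℂ}
    (hM : Shifted n d M) (hN : Shifted n e N) : Shifted n (d + e) (M * N) := by
  intro a b hb
  rw [Matrix.mul_apply]
  apply Finset.sum_eq_zero
  intro c _
  by_cases hc : (c : ℕ) < (a : ℕ) + d
  · rw [hM a c hc, zero_mul]
  · rw [hN c b (by omega), mul_zero]

lemma shifted_Lpow (n i : ℕ) : Shifted n i (Lmat n ^ i) := by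
  induction i with
  | zero =>
    intro a b hb
    simp only [pow_zero, Matrix.one_apply]
    rw [if_neg]
    intro h; subst h; omega
  | succ i ih =>
    rw [pow_succ]
    have hL : Shifted n 1 (Lmat n) := by
      intro a b hb
      simp only [Lmat, Matrix.of_apply]
      rw [if_neg]; omega
    exact shifted_mul ih hL

lemma shifted_sum {n d : ℕ} {s : Finset ℕ} {f : ℕ → Matrix (Fin n) (Fin n) ℂ}
    (h : ∀ i ∈ s, Shifted n d (f i)) : Shifted n d (∑ i ∈ s, f i) := by
  intro a b hb
  rw [Matrix.sum_apply]
  exact Finset.sum_eq_zero fun i hi => h i hi a b hb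

lemma shifted_smul {n d : ℕ} (c : ℂ) {M : Matrix (Fin n) (Fin n) ℂ}
    (hM : Shifted n d M) : Shifted n d (c • M) := by
  intro a b hb
  simp [hM a b hb]

lemma shifted_list_prod {n m : ℕ} (l : List (Matrix (Fin n) (Fin n) ℂ))
    (h : ∀ M ∈ l, Shifted n m M) : Shifted n (l.length * m) l.prod := by
  induction l with
  | nil =>
    simpa using shifted_Lpow n 0
  | cons M l ih =>
    simp only [List.prod_cons, List.length_cons]
    have : Shifted n (m + l.length * m) (M * l.prod) :=
      shifted_mul (h M List.mem_cons_self) (ih fun N hN => h N (List.mem_cons_of_mem M hN))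
    have heq : (l.length + 1) * m = m + l.length * m := by ring
    rwa [heq]

/-- Let `1 ≤ k ≤ n` and let `U₁, …, U_k ∈ M_n(ℂ)` be upper triangular
matrices.  Then `(u_{n,k} U₁)(u_{n,k} U₂)⋯(u_{n,k} U_k) = 0`. -/
theorem stmt11 (n k : ℕ) (hk : 1 ≤ k) (hkn : k ≤ n)
    (U : Fin k → Matrix (Fin n) (Fin n) ℂ)
    (hU : ∀ i : Fin k, ∀ a b : Fin n, b < a → U i a b = 0) :
    (List.ofFn fun i : Fin k => umat n k * U i).prod = 0 := by
  set m : ℕ := ⌈(n : ℝ) / k⌉₊ with hm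
  have hkpos : (0 : ℝ) < k := by positivity
  have hnm : n ≤ k * m := by
    have h1 : (n : ℝ) / k ≤ m := Nat.le_ceil _
    have h2 : (n : ℝ) ≤ k * m := by
      rw [div_le_iff₀ hkpos] at h1
      calc (n : ℝ) ≤ m * k := h1
        _ = k * m := by ring
    exact_mod_cast h2
  have humat : Shifted n m (umat n k) := by
    rw [umat, if_pos hkn]
    apply shifted_smul
    apply shifted_sum
    intro i hi
    have hi' : (n : ℝ) / k ≤ i := by
      simp only [Eset, Finset.mem_filter] at hi
      exact hi.2.1
    have hmi : m ≤ i := Nat.ceil_le.mpr hi'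
    exact shifted_mono hmi (shifted_Lpow n i)
  have hprod : Shifted n (k * m)
      (List.ofFn fun i : Fin k => umat n k * U i).prod := by
    have hlen : (List.ofFn fun i : Fin k => umat n k * U i).length = k := by simp
    have := shifted_list_prod (n := n) (m := m)
      (List.ofFn fun i : Fin k => umat n k * U i) ?_
    · rwa [hlen] at this
    · intro M hM
      rw [List.mem_ofFn] at hM
      obtain ⟨i, rfl⟩ := hM
      have hUi : Shifted n 0 (U i) := fun a b hb => hU i a b (by
        have : (b : ℕ) < (a : ℕ) := by omega
        exact Fin.lt_def.mpr this)
      simpa using shifted_mul humat hUi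
  ext a b
  rw [hprod a b (by have := b.isLt; omega)]
  simp
end
end

section
/- Let 0 ≠ T = (T_n) ∈ A and let 0 < ε < 1. Define K(k, b, ε) = 1/(2b(1−ε)ε^k) for k ∈ ℕ and b > 0. Then there exist k, m ∈ ℕ such that for every λ ∈ ℂ with |λ| > 4 p(T) ε and every n ≥ max{k, m}: the matrices λI − Δ̄_U T_n and λI − T_n are both invertible in M_n(ℂ), with ‖(λI − Δ̄_U T_n)^{-1}‖ ≤ K(k, p(T), ε) and ‖(λI − T_n)^{-1}‖ ≤ 2 K(k, p(T), ε). -/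
noncomputable section

/-- `K(k, b, ε) = 1/(2b(1−ε)ε^k)`. -/
def Kconst (k : ℕ) (b ε : ℝ) : ℝ := 1 / (2 * b * (1 - ε) * ε ^ k)

open scoped Matrix.Norms.L2Operator
open Matrix Finset

namespace Stmt12Aux

variable {n : ℕ}

lemma opNorm_eq (x : Matrix (Fin n) (Fin n) ℂ) : opNorm x = ‖x‖ := rfl

lemma norm_one_le' : ‖(1 : Matrix (Fin n) (Fin n) ℂ)‖ ≤ 1 := by
  rw [Matrix.cstar_norm_def, _root_.map_one]
  exact ContinuousLinearMap.norm_id_le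

lemma norm_pow_le' (x : Matrix (Fin n) (Fin n) ℂ) {a : ℝ} (ha : ‖x‖ ≤ a) :
    ∀ j, ‖x ^ j‖ ≤ a ^ j
  | 0 => by simpa using norm_one_le'
  | (j+1) => by
    have ha0 : 0 ≤ a := le_trans (norm_nonneg _) ha
    rw [pow_succ, pow_succ]
    exact (norm_mul_le _ _).trans
      (mul_le_mul (norm_pow_le' x ha j) ha (norm_nonneg _) (pow_nonneg ha0 _))

lemma matrix_norm_le (A : Matrix (Fin n) (Fin n) ℂ) {C : ℝ} (hC : 0 ≤ C)
    (h : ∀ y : EuclideanSpace ℂ (Fin n),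
      ∑ i, ‖A.mulVec y i‖ ^ 2 ≤ C ^ 2 * ∑ i, ‖y i‖ ^ 2) : ‖A‖ ≤ C := by
  rw [Matrix.cstar_norm_def]
  refine ContinuousLinearMap.opNorm_le_bound _ hC fun y => ?_
  have h1 : ‖Matrix.toEuclideanCLM (𝕜 := ℂ) A y‖
      = Real.sqrt (∑ i, ‖A.mulVec y i‖ ^ 2) := by
    rw [EuclideanSpace.norm_eq]; congr 1
  rw [h1, EuclideanSpace.norm_eq y]
  calc Real.sqrt (∑ i, ‖A.mulVec y i‖ ^ 2) ≤ Real.sqrt (C^2 * ∑ i, ‖y i‖^2) :=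
        Real.sqrt_le_sqrt (h y)
    _ = C * Real.sqrt (∑ i, ‖y i‖^2) := by
        rw [Real.sqrt_mul (sq_nonneg _), Real.sqrt_sq hC]

lemma coord_le_norm (y : EuclideanSpace ℂ (Fin n)) (i : Fin n) : ‖y i‖ ≤ ‖y‖ := by
  rw [EuclideanSpace.norm_eq]
  rw [show ‖y i‖ = Real.sqrt (‖y i‖^2) from (Real.sqrt_sq (norm_nonneg _)).symm]
  exact Real.sqrt_le_sqrt
    (Finset.single_le_sum (f := fun j => ‖y j‖^2) (fun j _ => sq_nonneg _) (mem_univ i))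

lemma entry_le_norm (A : Matrix (Fin n) (Fin n) ℂ) (i j : Fin n) : ‖A i j‖ ≤ ‖A‖ := by
  have hv : A.mulVec (EuclideanSpace.single j (1:ℂ)) i = A i j := by
    simp [Matrix.mulVec, dotProduct, EuclideanSpace.single_apply, mul_ite]
  have h2 : ‖(Matrix.toEuclideanCLM (𝕜 := ℂ) A) (EuclideanSpace.single j (1:ℂ))‖
      ≤ ‖A‖ * 1 := by
    have := (Matrix.toEuclideanCLM (𝕜 := ℂ) A).le_opNorm (EuclideanSpace.single j (1:ℂ))
    rwa [EuclideanSpace.norm_single, norm_one, ← Matrix.cstar_norm_def] at this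
  calc ‖A i j‖ = ‖(Matrix.toEuclideanCLM (𝕜 := ℂ) A) (EuclideanSpace.single j (1:ℂ)) i‖ := by
        rw [show (Matrix.toEuclideanCLM (𝕜 := ℂ) A) (EuclideanSpace.single j (1:ℂ)) i
          = A.mulVec (EuclideanSpace.single j (1:ℂ)) i from rfl, hv]
    _ ≤ ‖(Matrix.toEuclideanCLM (𝕜 := ℂ) A) (EuclideanSpace.single j (1:ℂ))‖ :=
        coord_le_norm _ i
    _ ≤ ‖A‖ := by simpa using h2

lemma diagonal_norm_le (g : Fin n → ℂ) {β : ℝ} (hβ : 0 ≤ β) (hg : ∀ i, ‖g i‖ ≤ β) :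
    ‖Matrix.diagonal g‖ ≤ β := by
  refine matrix_norm_le _ hβ fun y => ?_
  rw [Finset.mul_sum]
  refine Finset.sum_le_sum fun i _ => ?_
  rw [Matrix.mulVec_diagonal, norm_mul, mul_pow]
  exact mul_le_mul_of_nonneg_right (pow_le_pow_left₀ (norm_nonneg _) (hg i) 2) (sq_nonneg _)

lemma Lpow_apply (d : ℕ) (i j : Fin n) :
    (Lmat n ^ d) i j = if (i:ℕ) + d = (j:ℕ) then 1 else 0 := by
  induction d generalizing i j with
  | zero => simp [Matrix.one_apply, Fin.ext_iff]
  | succ d ih =>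
    rw [pow_succ, Matrix.mul_apply]
    by_cases h : (i:ℕ) + (d+1) = (j:ℕ)
    · have hd : (i:ℕ) + d < n := by omega
      rw [Finset.sum_eq_single (⟨(i:ℕ)+d, hd⟩ : Fin n)]
      · rw [ih]
        have h2 : (i:ℕ) + d + 1 = (j:ℕ) := by omega
        simp [Lmat, h, h2]
      · intro c _ hc
        rw [ih]
        simp only [Lmat, Matrix.of_apply]
        rcases eq_or_ne ((i:ℕ) + d) ((c:ℕ)) with h1 | h1
        · exact absurd (Fin.ext h1.symm : c = _) hc
        · rw [if_neg h1, zero_mul]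
      · intro hmem; exact absurd (Finset.mem_univ _) hmem
    · rw [if_neg h]
      refine Finset.sum_eq_zero fun c _ => ?_
      rw [ih]
      simp only [Lmat, Matrix.of_apply]
      rcases eq_or_ne ((i:ℕ) + d) ((c:ℕ)) with h1 | h1
      · rw [if_pos h1, one_mul, if_neg (by omega)]
      · rw [if_neg h1, zero_mul]

lemma L_mul_conjT : Lmat n * (Lmat n)ᴴ
    = Matrix.diagonal (fun i : Fin n => if (i:ℕ)+1 < n then 1 else 0) := by
  ext i j
  rw [Matrix.mul_apply]
  rcases eq_or_ne i j with rfl | hij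
  · rw [Matrix.diagonal_apply_eq]
    by_cases h : (i:ℕ)+1 < n
    · rw [Finset.sum_eq_single (⟨(i:ℕ)+1, h⟩ : Fin n)]
      · simp [Lmat, Matrix.conjTranspose_apply, h]
      · intro c _ hc
        simp only [Lmat, Matrix.of_apply, Matrix.conjTranspose_apply]
        rcases eq_or_ne ((i:ℕ) + 1) ((c:ℕ)) with h1 | h1
        · exact absurd (Fin.ext h1.symm : c = _) hc
        · rw [if_neg h1, zero_mul]
      · intro hmem; exact absurd (Finset.mem_univ _) hmem
    · rw [if_neg h]
      refine Finset.sum_eq_zero fun c _ => ?_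
      simp only [Lmat, Matrix.of_apply, Matrix.conjTranspose_apply]
      have : (i:ℕ) + 1 ≠ (c:ℕ) := by omega
      rw [if_neg this, zero_mul]
  · rw [Matrix.diagonal_apply_ne _ hij]
    refine Finset.sum_eq_zero fun c _ => ?_
    simp only [Lmat, Matrix.of_apply, Matrix.conjTranspose_apply]
    rcases eq_or_ne ((i:ℕ) + 1) ((c:ℕ)) with h1 | h1
    · have : (j:ℕ) + 1 ≠ (c:ℕ) := fun hc => hij (Fin.ext (by omega))
      rw [if_neg this]; simp
    · rw [if_neg h1, zero_mul]

lemma norm_L_le : ‖Lmat n‖ ≤ 1 := by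
  have h1 : ‖Lmat n * (Lmat n)ᴴ‖ ≤ 1 := by
    rw [L_mul_conjT]
    refine diagonal_norm_le _ zero_le_one fun i => ?_
    split <;> simp
  have h2 : ‖Lmat n * (Lmat n)ᴴ‖ = ‖Lmat n‖ * ‖Lmat n‖ := by
    have := Matrix.l2_opNorm_conjTranspose_mul_self (Lmat n)ᴴ
    rwa [Matrix.conjTranspose_conjTranspose, Matrix.l2_opNorm_conjTranspose] at this
  nlinarith [norm_nonneg (Lmat n)]

lemma norm_Lpow_le (d : ℕ) : ‖Lmat n ^ d‖ ≤ 1 := by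
  induction d with
  | zero => simpa using norm_one_le'
  | succ j ih =>
    rw [pow_succ]
    calc ‖Lmat n ^ j * Lmat n‖ ≤ ‖Lmat n ^ j‖ * ‖Lmat n‖ := norm_mul_le _ _
      _ ≤ 1 * 1 := mul_le_mul ih norm_L_le (norm_nonneg _) zero_le_one
      _ = 1 := one_mul 1

lemma LpowT_eq_conjT (d : ℕ) : (Lmat n ^ d)ᵀ = (Lmat n ^ d)ᴴ := by
  ext i j
  rw [Matrix.transpose_apply, Matrix.conjTranspose_apply, Lpow_apply]
  split <;> simp

lemma norm_LpowT_le (d : ℕ) : ‖(Lmat n ^ d)ᵀ‖ ≤ 1 := by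
  rw [LpowT_eq_conjT, Matrix.l2_opNorm_conjTranspose]
  exact norm_Lpow_le d

/-- `Supp r x` : entries of `x` vanish below the `r`-th superdiagonal. -/
def Supp (r : ℝ) (x : Matrix (Fin n) (Fin n) ℂ) : Prop :=
  ∀ i j : Fin n, ((j:ℕ):ℝ) < ((i:ℕ):ℝ) + r → x i j = 0

lemma Supp.mono {r r' : ℝ} (h : r' ≤ r) {x : Matrix (Fin n) (Fin n) ℂ} (hx : Supp r x) :
    Supp r' x := fun i j hij => hx i j (by linarith)

lemma Supp.mul {r s : ℝ} {x y : Matrix (Fin n) (Fin n) ℂ} (hx : Supp r x) (hy : Supp s y) :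
    Supp (r + s) (x * y) := by
  intro i j hij
  rw [Matrix.mul_apply]
  refine Finset.sum_eq_zero fun c _ => ?_
  by_cases h : ((c:ℕ):ℝ) < ((i:ℕ):ℝ) + r
  · rw [hx i c h, zero_mul]
  · rw [hy c j (by push_neg at h; linarith), mul_zero]

lemma Supp.add {r : ℝ} {x y : Matrix (Fin n) (Fin n) ℂ} (hx : Supp r x) (hy : Supp r y) :
    Supp r (x + y) := fun i j hij => by
  rw [Matrix.add_apply, hx i j hij, hy i j hij, add_zero]

lemma Supp.sub {r : ℝ} {x y : Matrix (Fin n) (Fin n) ℂ} (hx : Supp r x) (hy : Supp r y) :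
    Supp r (x - y) := fun i j hij => by
  rw [Matrix.sub_apply, hx i j hij, hy i j hij, sub_zero]

lemma Supp.smul {r : ℝ} (a : ℂ) {x : Matrix (Fin n) (Fin n) ℂ} (hx : Supp r x) :
    Supp r (a • x) := fun i j hij => by
  rw [Matrix.smul_apply, hx i j hij, smul_zero]

lemma Supp.zero {r : ℝ} : Supp r (0 : Matrix (Fin n) (Fin n) ℂ) := fun _ _ _ => rfl

lemma Supp.sum {r : ℝ} {ι : Type*} {S : Finset ι} {f : ι → Matrix (Fin n) (Fin n) ℂ}
    (h : ∀ i ∈ S, Supp r (f i)) : Supp r (∑ i ∈ S, f i) := by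
  classical
  induction S using Finset.induction_on with
  | empty => simpa using Supp.zero
  | insert _ _ hx ih =>
    rw [Finset.sum_insert hx]
    exact (h _ (Finset.mem_insert_self _ _)).add
      (ih fun i hi => h i (Finset.mem_insert_of_mem hi))

lemma Supp.one : Supp 0 (1 : Matrix (Fin n) (Fin n) ℂ) := by
  intro i j hij
  exact Matrix.one_apply_ne (fun h => by rw [h] at hij; simp at hij)

lemma Supp.eq_zero {x : Matrix (Fin n) (Fin n) ℂ} (hx : Supp (n:ℝ) x) : x = 0 := by
  ext i j
  rw [hx i j (by
    have hj : (j:ℕ) < n := j.isLt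
    have h2 : ((j:ℕ):ℝ) < (n:ℝ) := by exact_mod_cast hj
    have hi : (0:ℝ) ≤ ((i:ℕ):ℝ) := by positivity
    linarith)]
  rfl

/-- The key combinatorial bound: powers of `R + V` where `R` is supported at shift `s`
(with `κ·s ≥ n`) and `V` is upper triangular. -/
lemma word_bound {κ : ℕ} (hκ : 1 ≤ κ) {s : ℝ} (hns : (n:ℝ) ≤ κ * s)
    {R V : Matrix (Fin n) (Fin n) ℂ} {ρ v : ℝ} (hρ0 : 0 ≤ ρ) (hv0 : 0 ≤ v)
    (hRs : Supp s R) (hR : ‖R‖ ≤ ρ) (hVs : Supp 0 V) (hV : ‖V‖ ≤ v) (j : ℕ) :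
    ‖(R + V) ^ j‖ ≤ ∑ t ∈ Finset.range κ, (j.choose t : ℝ) * ρ ^ t * v ^ (j - t) := by
  obtain ⟨κ', rfl⟩ : ∃ κ', κ = κ' + 1 := ⟨κ - 1, (Nat.succ_pred_eq_of_pos hκ).symm⟩
  suffices h : ∃ w : ℕ → Matrix (Fin n) (Fin n) ℂ,
      (R + V) ^ j = ∑ t ∈ Finset.range (κ'+1), w t ∧
      ∀ t, t < κ'+1 → Supp ((t:ℝ) * s) (w t) ∧
        ‖w t‖ ≤ (j.choose t : ℝ) * ρ ^ t * v ^ (j - t) by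
    obtain ⟨w, hw1, hw2⟩ := h
    rw [hw1]
    exact (norm_sum_le _ _).trans
      (Finset.sum_le_sum fun t ht => (hw2 t (Finset.mem_range.mp ht)).2)
  induction j with
  | zero =>
    refine ⟨fun t => if t = 0 then 1 else 0, ?_, ?_⟩
    · rw [Finset.sum_ite_eq' (Finset.range (κ'+1)) 0 (fun _ => (1 : Matrix (Fin n) (Fin n) ℂ))]
      simp
    · intro t ht
      dsimp only
      rcases eq_or_ne t 0 with rfl | ht0
      · refine ⟨by rw [if_pos rfl]; simpa using Supp.one, ?_⟩
        rw [if_pos rfl]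
        simpa using norm_one_le'
      · refine ⟨by rw [if_neg ht0]; exact Supp.zero, ?_⟩
        rw [if_neg ht0]
        simp [Nat.choose_eq_zero_of_lt (Nat.pos_of_ne_zero ht0)]
  | succ j ih =>
    obtain ⟨w, hsum, hprop⟩ := ih
    refine ⟨fun t => V * w t + (if t = 0 then 0 else R * w (t-1)), ?_, ?_⟩
    · have hz : R * w κ' = 0 := by
        refine Supp.eq_zero (Supp.mono ?_ (hRs.mul (hprop κ' (by omega)).1))
        calc (n:ℝ) ≤ ((κ'+1:ℕ):ℝ) * s := hns
          _ = s + (κ':ℝ) * s := by push_cast; ring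
      calc (R + V) ^ (j+1) = (R + V) * (R + V) ^ j := by rw [pow_succ']
        _ = (∑ t ∈ Finset.range (κ'+1), R * w t) + ∑ t ∈ Finset.range (κ'+1), V * w t := by
            rw [hsum, add_mul, Finset.mul_sum, Finset.mul_sum]
        _ = (∑ t ∈ Finset.range κ', R * w t) + ∑ t ∈ Finset.range (κ'+1), V * w t := by
            rw [Finset.sum_range_succ, hz, add_zero]
        _ = ∑ t ∈ Finset.range (κ'+1), (V * w t + if t = 0 then 0 else R * w (t-1)) := by
            rw [Finset.sum_add_distrib]
            have h2 : ∑ t ∈ Finset.range (κ'+1), (if t = 0 then 0 else R * w (t-1))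
                = ∑ t ∈ Finset.range κ', R * w t := by
              rw [Finset.sum_range_succ']
              simp
            rw [h2, add_comm]
    · intro t ht
      dsimp only
      have hVw : ‖V * w t‖ ≤ v * ((j.choose t : ℝ) * ρ ^ t * v ^ (j - t)) :=
        (norm_mul_le _ _).trans (mul_le_mul hV (hprop t ht).2 (norm_nonneg _) hv0)
      constructor
      · refine Supp.add ((hVs.mul (hprop t ht).1).mono (zero_add ((t:ℝ)*s)).ge) ?_
        rcases eq_or_ne t 0 with rfl | ht0
        · rw [if_pos rfl]; exact Supp.zero
        · rw [if_neg ht0]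
          have h1 : t - 1 < κ' + 1 := by omega
          refine (hRs.mul (hprop (t-1) h1).1).mono (le_of_eq ?_)
          have h3 : ((t:ℕ):ℝ) = ((t-1:ℕ):ℝ) + 1 := by
            rw [Nat.cast_sub (Nat.one_le_iff_ne_zero.mpr ht0)]
            ring
          rw [h3]; ring
      · rcases eq_or_ne t 0 with rfl | ht0
        · calc ‖V * w 0 + (if (0:ℕ) = 0 then 0 else R * w (0-1))‖
              = ‖V * w 0‖ := by rw [if_pos rfl, add_zero]
            _ ≤ v * ((j.choose 0 : ℝ) * ρ ^ 0 * v ^ (j - 0)) := hVw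
            _ = ((j+1).choose 0 : ℝ) * ρ ^ 0 * v ^ (j + 1 - 0) := by
              simp [pow_succ']
        · obtain ⟨t'', rfl⟩ : ∃ t'', t = t'' + 1 :=
            ⟨t - 1, (Nat.succ_pred_eq_of_pos (Nat.pos_of_ne_zero ht0)).symm⟩
          have hB : ‖(if t''+1 = 0 then (0:Matrix (Fin n) (Fin n) ℂ) else R * w (t''+1-1))‖
              ≤ (j.choose t'' : ℝ) * ρ ^ (t''+1) * v ^ (j - t'') := by
            rw [if_neg (Nat.succ_ne_zero t''), Nat.add_sub_cancel]
            refine (norm_mul_le _ _).trans ?_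
            calc ‖R‖ * ‖w t''‖ ≤ ρ * ((j.choose t'' : ℝ) * ρ ^ t'' * v ^ (j - t'')) :=
                mul_le_mul hR (hprop t'' (by omega)).2 (norm_nonneg _) hρ0
              _ = (j.choose t'' : ℝ) * ρ ^ (t''+1) * v ^ (j - t'') := by
                rw [pow_succ']; ring
          have hA : ‖V * w (t''+1)‖
              ≤ (j.choose (t''+1) : ℝ) * ρ ^ (t''+1) * v ^ (j - t'') := by
            refine hVw.trans ?_
            rcases le_or_gt (t''+1) j with hle | hlt
            · have h5 : j - t'' = (j - (t''+1)) + 1 := by omega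
              rw [h5, pow_succ']
              exact le_of_eq (by ring)
            · have h5 : j.choose (t''+1) = 0 := Nat.choose_eq_zero_of_lt hlt
              simp [h5]
          calc ‖V * w (t''+1) + (if t''+1 = 0 then 0 else R * w (t''+1-1))‖
              ≤ ‖V * w (t''+1)‖ + ‖(if t''+1 = 0 then (0:Matrix (Fin n) (Fin n) ℂ)
                  else R * w (t''+1-1))‖ := norm_add_le _ _
            _ ≤ (j.choose (t''+1) : ℝ) * ρ ^ (t''+1) * v ^ (j - t'')
                + (j.choose t'' : ℝ) * ρ ^ (t''+1) * v ^ (j - t'') := add_le_add hA hB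
            _ = ((j+1).choose (t''+1) : ℝ) * ρ ^ (t''+1) * v ^ (j + 1 - (t''+1)) := by
              rw [Nat.choose_succ_succ, Nat.succ_sub_succ]
              push_cast; ring

lemma Eset_lb {k s : ℕ} (hs : s ∈ Eset n k) : (n:ℝ)/k ≤ s := (Finset.mem_filter.mp hs).2.1

lemma norm_umat_le {κ : ℕ} (hκn : κ ≤ n) : ‖umat n κ‖ ≤ 1 := by
  rw [umat, if_pos hκn]
  rcases eq_or_ne (Eset n κ).card 0 with h0 | h0
  · rw [Finset.card_eq_zero.mp h0]
    simp
  · calc ‖((Eset n κ).card : ℂ)⁻¹ • ∑ i ∈ Eset n κ, Lmat n ^ i‖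
        = ‖((Eset n κ).card : ℂ)⁻¹‖ * ‖∑ i ∈ Eset n κ, Lmat n ^ i‖ := norm_smul _ _
      _ ≤ ((Eset n κ).card : ℝ)⁻¹ * ((Eset n κ).card : ℝ) := by
          refine mul_le_mul (le_of_eq ?_) ((norm_sum_le _ _).trans ?_) (norm_nonneg _)
            (by positivity)
          · rw [norm_inv, Complex.norm_natCast]
          · calc ∑ i ∈ Eset n κ, ‖Lmat n ^ i‖ ≤ ∑ i ∈ Eset n κ, (1:ℝ) :=
                Finset.sum_le_sum fun i _ => norm_Lpow_le i
              _ = ((Eset n κ).card : ℝ) := by simp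
      _ = 1 := inv_mul_cancel₀ (by exact_mod_cast h0)

lemma supp_Lpow (d : ℕ) : Supp (d:ℝ) (Lmat n ^ d) := by
  intro i j hij
  rw [Lpow_apply]
  refine if_neg fun h => ?_
  rw [← h] at hij
  push_cast at hij
  linarith

lemma supp_upperT (x : Matrix (Fin n) (Fin n) ℂ) : Supp 0 (upperT x) := by
  intro i j hij
  rw [add_zero] at hij
  have : ¬ (i ≤ j) := by
    rw [Fin.le_def]; exact_mod_cast not_le.mpr hij
  exact if_neg this

lemma supp_mul_umat {κ : ℕ} (hκn : κ ≤ n) {U : Matrix (Fin n) (Fin n) ℂ} (hU : Supp 0 U) :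
    Supp ((n:ℝ)/κ) (U * umat n κ) := by
  rw [umat, if_pos hκn, Matrix.mul_smul, Finset.mul_sum]
  refine Supp.smul _ (Supp.sum fun i hi => ?_)
  have h1 : Supp (0 + (i:ℝ)) (U * Lmat n ^ i) := hU.mul (supp_Lpow i)
  refine h1.mono ?_
  rw [zero_add]
  exact Eset_lb hi

/-- `1 - E` is invertible with controlled inverse when `‖E‖ ≤ 1/2`. -/
lemma inv_one_sub (E : Matrix (Fin n) (Fin n) ℂ) (hE : ‖E‖ ≤ 1/2) :
    ∃ h : Matrix (Fin n) (Fin n) ℂ, (1 - E) * h = 1 ∧ h * (1 - E) = 1 ∧ ‖h‖ ≤ 2 := by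
  have key : ∀ z : EuclideanSpace ℂ (Fin n), (1 - E).mulVec z = 0 → z = 0 := by
    intro z hz
    rw [Matrix.sub_mulVec, Matrix.one_mulVec, sub_eq_zero] at hz
    have h1 : z = (EuclideanSpace.equiv (Fin n) ℂ).symm (E.mulVec z) := by
      ext i
      exact congrFun hz i
    have h4 : ‖z‖ ≤ ‖E‖ * ‖z‖ := by
      calc ‖z‖ = ‖(EuclideanSpace.equiv (Fin n) ℂ).symm (E.mulVec z)‖ := by rw [← h1]
        _ ≤ ‖E‖ * ‖z‖ := Matrix.l2_opNorm_mulVec E z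
    have h5 : ‖z‖ ≤ 0 := by nlinarith [norm_nonneg z]
    exact norm_le_zero_iff.mp h5
  have hinj : Function.Injective ((1 - E).mulVec) := by
    intro x y hxy
    have h1 : (1 - E).mulVec (x - y) = 0 := by
      rw [Matrix.mulVec_sub, sub_eq_zero]
      exact hxy
    have h2 := key (WithLp.toLp 2 (x - y)) h1
    exact sub_eq_zero.mp (congrArg WithLp.ofLp h2)
  have hu : IsUnit (1 - E) := Matrix.mulVec_injective_iff_isUnit.mp hinj
  obtain ⟨u, hu'⟩ := hu
  set w : Matrix (Fin n) (Fin n) ℂ :=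
    ((u⁻¹ : (Matrix (Fin n) (Fin n) ℂ)ˣ) : Matrix (Fin n) (Fin n) ℂ) with hw
  have hw1 : (1 - E) * w = 1 := by rw [← hu']; exact u.mul_inv
  have hw2 : w * (1 - E) = 1 := by rw [← hu']; exact u.inv_mul
  have h7 := hw1
  rw [sub_mul, one_mul] at h7
  have h6 : w = 1 + E * w := by
    rw [← h7, sub_add_cancel]
  have h8 : ‖w‖ ≤ 1 + ‖E‖ * ‖w‖ := by
    conv_lhs => rw [h6]
    exact (norm_add_le _ _).trans (add_le_add norm_one_le' (norm_mul_le _ _))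
  refine ⟨w, hw1, hw2, ?_⟩
  nlinarith [norm_nonneg w, norm_nonneg E, mul_le_mul_of_nonneg_right hE (norm_nonneg w)]

/-- lowerT decomposition into subdiagonals. -/
lemma lowerT_eq (x : Matrix (Fin n) (Fin n) ℂ) :
    lowerT x = ∑ d ∈ Finset.Ico 1 n, (Lmat n ^ d)ᵀ *
      Matrix.diagonal (fun j : Fin n =>
        if h : (j:ℕ) + d < n then x ⟨(j:ℕ)+d, h⟩ j else 0) := by
  ext i j
  rw [Matrix.sum_apply]
  have hterm : ∀ d ∈ Finset.Ico 1 n, ((Lmat n ^ d)ᵀ *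
      Matrix.diagonal (fun j : Fin n =>
        if h : (j:ℕ) + d < n then x ⟨(j:ℕ)+d, h⟩ j else 0)) i j
      = if (j:ℕ) + d = (i:ℕ) then x i j else 0 := by
    intro d hd
    rw [Matrix.mul_diagonal, Matrix.transpose_apply, Lpow_apply]
    rcases eq_or_ne ((j:ℕ) + d) ((i:ℕ)) with h1 | h1
    · rw [if_pos h1, if_pos h1, one_mul, dif_pos (h1 ▸ i.isLt)]
      congr 1
      exact Fin.ext h1
    · rw [if_neg h1, if_neg h1, zero_mul]
  rw [Finset.sum_congr rfl hterm]
  by_cases hij : (j:ℕ) < (i:ℕ)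
  · have hmem : (i:ℕ) - (j:ℕ) ∈ Finset.Ico 1 n := by
      rw [Finset.mem_Ico]
      constructor
      · omega
      · have := i.isLt; omega
    rw [Finset.sum_eq_single ((i:ℕ) - (j:ℕ))]
    · rw [if_pos (by omega)]
      rw [lowerT, Matrix.of_apply, if_pos (by rwa [Fin.lt_def])]
    · intro d _ hd
      exact if_neg (fun h => hd (by omega))
    · intro h; exact absurd hmem h
  · rw [lowerT, Matrix.of_apply, if_neg (show ¬ j < i by rw [Fin.lt_def]; exact_mod_cast hij)]
    refine (Finset.sum_eq_zero fun d hd => if_neg fun h => hij ?_).symm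
    rw [Finset.mem_Ico] at hd
    omega

lemma lowerT_norm_le {c' b : ℝ} (hc : 1 < c') (hb : 0 ≤ b) (x : Matrix (Fin n) (Fin n) ℂ)
    (hx : ∀ i j : Fin n, (j:ℕ) < (i:ℕ) → ‖x i j‖ ≤ b * (c'⁻¹) ^ ((i:ℕ) - (j:ℕ))) :
    ‖lowerT x‖ ≤ b / (c' - 1) := by
  have hc0 : 0 < c' := lt_trans one_pos hc
  have hinv0 : 0 ≤ c'⁻¹ := by positivity
  have hinv1 : c'⁻¹ < 1 := by rw [inv_lt_one_iff₀]; exact Or.inr hc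
  rw [lowerT_eq]
  refine le_trans (norm_sum_le _ _) ?_
  have hterm : ∀ d ∈ Finset.Ico 1 n, ‖(Lmat n ^ d)ᵀ *
      Matrix.diagonal (fun j : Fin n =>
        if h : (j:ℕ) + d < n then x ⟨(j:ℕ)+d, h⟩ j else 0)‖ ≤ b * (c'⁻¹) ^ d := by
    intro d hd
    rw [Finset.mem_Ico] at hd
    refine (norm_mul_le _ _).trans ?_
    have hdiag : ‖Matrix.diagonal (fun j : Fin n =>
        if h : (j:ℕ) + d < n then x ⟨(j:ℕ)+d, h⟩ j else 0)‖ ≤ b * (c'⁻¹) ^ d := by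
      refine diagonal_norm_le _ (by positivity) fun j => ?_
      by_cases h : (j:ℕ) + d < n
      · rw [dif_pos h]
        have h2 := hx ⟨(j:ℕ)+d, h⟩ j (show ((j:ℕ)) < (j:ℕ) + d by omega)
        rw [show (((⟨(j:ℕ)+d, h⟩ : Fin n)):ℕ) = (j:ℕ) + d from rfl,
          show (j:ℕ) + d - (j:ℕ) = d by omega] at h2
        exact h2
      · rw [dif_neg h, norm_zero]; positivity
    calc ‖(Lmat n ^ d)ᵀ‖ * ‖Matrix.diagonal (fun j : Fin n =>
        if h : (j:ℕ) + d < n then x ⟨(j:ℕ)+d, h⟩ j else 0)‖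
        ≤ 1 * (b * (c'⁻¹) ^ d) :=
          mul_le_mul (norm_LpowT_le d) hdiag (norm_nonneg _) zero_le_one
      _ = b * (c'⁻¹) ^ d := one_mul _
  refine le_trans (Finset.sum_le_sum hterm) ?_
  rw [← Finset.mul_sum]
  calc b * ∑ d ∈ Finset.Ico 1 n, (c'⁻¹) ^ d ≤ b * ((c'⁻¹) ^ 1 / (1 - c'⁻¹)) :=
      mul_le_mul_of_nonneg_left (geom_sum_Ico_le_of_lt_one hinv0 hinv1) hb
    _ = b / (c' - 1) := by
      rw [pow_one]
      congr 1
      field_simp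

lemma upperT_add_lowerT (x : Matrix (Fin n) (Fin n) ℂ) : upperT x + lowerT x = x := by
  ext i j
  simp only [Matrix.add_apply, upperT, lowerT, Matrix.of_apply]
  by_cases h : i ≤ j
  · rw [if_pos h, if_neg (not_lt.mpr h), add_zero]
  · rw [if_neg h, if_pos (not_le.mp h), zero_add]

lemma entry_decay (c : ℕ → ℝ) (hc : 1 < c n) {b : ℝ} (x : Matrix (Fin n) (Fin n) ℂ)
    (h : ‖dMat c n * x * dMatInv c n‖ ≤ b) (i j : Fin n) (hij : (j:ℕ) < (i:ℕ)) :
    ‖x i j‖ ≤ b * ((c n)⁻¹) ^ ((i:ℕ) - (j:ℕ)) := by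
  have hc0 : 0 < c n := lt_trans one_pos hc
  have hentry := (entry_le_norm (dMat c n * x * dMatInv c n) i j).trans h
  have he : (dMat c n * x * dMatInv c n) i j
      = ((c n ^ ((i:ℕ)+1) : ℝ) : ℂ) * x i j * (((c n ^ ((j:ℕ)+1))⁻¹ : ℝ) : ℂ) := by
    rw [dMat, dMatInv, Matrix.mul_diagonal, Matrix.diagonal_mul]
  rw [he] at hentry
  rw [norm_mul, norm_mul, Complex.norm_real, Complex.norm_real,
    Real.norm_eq_abs, Real.norm_eq_abs,
    abs_of_pos (by positivity), abs_of_pos (by positivity)] at hentry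
  have hpow : c n ^ ((i:ℕ)+1) = c n ^ ((j:ℕ)+1) * c n ^ ((i:ℕ)-(j:ℕ)) := by
    rw [← pow_add]
    congr 1
    omega
  rw [hpow] at hentry
  have hp1 : 0 < c n ^ ((j:ℕ)+1) := by positivity
  have hp2 : 0 < c n ^ ((i:ℕ)-(j:ℕ)) := by positivity
  rw [inv_pow]
  rw [show c n ^ ((j:ℕ)+1) * c n ^ ((i:ℕ)-(j:ℕ)) * ‖x i j‖ * (c n ^ ((j:ℕ)+1))⁻¹
    = c n ^ ((i:ℕ)-(j:ℕ)) * ‖x i j‖ * (c n ^ ((j:ℕ)+1) * (c n ^ ((j:ℕ)+1))⁻¹) from by ring,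
    mul_inv_cancel₀ (ne_of_gt hp1), mul_one] at hentry
  rw [← le_div_iff₀' hp2, div_eq_mul_inv, mul_comm b _, mul_comm _ b] at hentry
  exact hentry

end Stmt12Aux


set_option maxHeartbeats 1000000 in
open Stmt12Aux in
/-- Let `0 ≠ T = (T_n) ∈ A` and `0 < ε < 1`.  Then there exist `k, m ∈ ℕ`
such that for every `λ ∈ ℂ` with `|λ| > 4 p(T) ε` and every `n ≥ max{k, m}`: the matrices
`λI − Δ̄_U T_n` and `λI − T_n` are both invertible in `M_n(ℂ)`, with
`‖(λI − Δ̄_U T_n)⁻¹‖ ≤ K(k, p(T), ε)` and `‖(λI − T_n)⁻¹‖ ≤ 2 K(k, p(T), ε)`. -/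
theorem stmt12 (c : ℕ → ℝ) (hmono : StrictMono c) (hone : ∀ n, 1 < c n)
    (hunbdd : ∀ M : ℝ, ∃ n, M < c n)
    (T : ∀ n, Matrix (Fin n) (Fin n) ℂ) (hT : memA c T) (hT0 : T ≠ 0)
    (ε : ℝ) (hε : 0 < ε) (hε1 : ε < 1) :
    ∃ k m : ℕ, ∀ lam : ℂ, 4 * pA c T * ε < ‖lam‖ → ∀ n : ℕ, max k m ≤ n →
      IsUnit (lam • (1 : Matrix (Fin n) (Fin n) ℂ) - upperT (T n)) ∧
      opNorm ((lam • (1 : Matrix (Fin n) (Fin n) ℂ) - upperT (T n))⁻¹) ≤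
        Kconst k (pA c T) ε ∧
      IsUnit (lam • (1 : Matrix (Fin n) (Fin n) ℂ) - T n) ∧
      opNorm ((lam • (1 : Matrix (Fin n) (Fin n) ℂ) - T n)⁻¹) ≤
        2 * Kconst k (pA c T) ε := by
  obtain ⟨⟨M, hM⟩, hA⟩ := hT
  set b : ℝ := pA c T with hbdef
  have hbdd : BddAbove (Set.range fun m => pnorm c m (T m)) :=
    ⟨M, by rintro y ⟨m, rfl⟩; exact hM m⟩
  have hple : ∀ m, pnorm c m (T m) ≤ b := fun m => le_ciSup hbdd m
  clear_value b
  have hb0 : 0 < b := by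
    obtain ⟨n₀, hn₀⟩ := Function.ne_iff.mp hT0
    have h1 : (0:ℝ) < ‖T n₀‖ := by
      rw [norm_pos_iff]
      simpa using hn₀
    calc (0:ℝ) < ‖T n₀‖ := h1
      _ ≤ pnorm c n₀ (T n₀) := le_max_left _ _
      _ ≤ b := hple n₀
  have hε1' : 0 < 1 - ε := by linarith
  have hbε : 0 < b*ε := mul_pos hb0 hε
  have h2b : (0:ℝ) < 2*b := by linarith
  have h4b : (0:ℝ) < 4*b*ε := by linarith
  -- Step 1: get the averaging index κ
  obtain ⟨K, hK⟩ := hA (b*ε/2) (by linarith)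
  set κ : ℕ := max K 1 with hκdef
  have hκ1 : 1 ≤ κ := le_max_right _ _
  have hκK : K ≤ κ := le_max_left _ _
  clear_value κ
  -- Step 2: choose J
  have hε2 : (0:ℝ) < ε/2 := by linarith
  have hκR : (0:ℝ) < (κ:ℝ) := by exact_mod_cast hκ1
  have hδ'pos : (0:ℝ) < (1/2) * (ε/2)^κ / κ :=
    div_pos (mul_pos one_half_pos (pow_pos hε2 κ)) hκR
  have hlo := isLittleO_pow_const_const_pow_of_one_lt (R := ℝ) κ
    (show (1:ℝ) < 4 by norm_num)
  have hev := (hlo.def hδ'pos).and (Filter.eventually_ge_atTop (max κ 1))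
  obtain ⟨J, hJa, hJb⟩ := hev.exists
  have hκJ : κ ≤ J := le_trans (le_max_left _ _) hJb
  have hJ1 : 1 ≤ J := le_trans (le_max_right _ _) hJb
  have hJbound : (κ:ℝ) * ((J:ℝ)^κ * (2/ε)^κ) ≤ 1/2 * 4^J := by
    rw [Real.norm_eq_abs, Real.norm_eq_abs, abs_of_nonneg (by positivity),
      abs_of_nonneg (by positivity)] at hJa
    have h2e : (0:ℝ) < (2/ε)^κ := pow_pos (div_pos two_pos hε) κ
    have h3 : ((J:ℝ))^κ * ((2/ε)^κ * κ) ≤ ((1/2) * (ε/2)^κ / κ) * 4^J * ((2/ε)^κ * κ) :=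
      mul_le_mul_of_nonneg_right hJa (mul_pos h2e hκR).le
    calc (κ:ℝ) * ((J:ℝ)^κ * (2/ε)^κ) = ((J:ℝ))^κ * ((2/ε)^κ * κ) := by ring
      _ ≤ ((1/2) * (ε/2)^κ / κ) * 4^J * ((2/ε)^κ * κ) := h3
      _ = 1/2 * 4^J * ((ε/2)^κ * (2/ε)^κ) := by field_simp
      _ = 1/2 * 4^J := by
          rw [← mul_pow]
          rw [show (ε/2) * (2/ε) = 1 from by field_simp]
          simp
  -- Step 3: the geometric constant B₀
  set B₀ : ℝ := ∑ j ∈ Finset.range J, (2*b)^j * ((4*b*ε)^(j+1))⁻¹ with hB₀def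
  have hB₀pos : 0 < B₀ := by
    rw [hB₀def]
    refine Finset.sum_pos (fun j _ => mul_pos (pow_pos h2b j)
      (inv_pos.mpr (pow_pos h4b _))) ⟨0, Finset.mem_range.mpr (by omega)⟩
  clear_value B₀
  -- Step 4: choose k
  have hX : (0:ℝ) < 2*B₀ * (2*b*(1-ε)) :=
    mul_pos (by linarith) (mul_pos h2b hε1')
  obtain ⟨k₀, hk₀⟩ := exists_pow_lt_of_lt_one (one_div_pos.mpr hX) hε1
  set k : ℕ := max k₀ κ with hkdef
  have hκk : κ ≤ k := le_max_right _ _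
  have hk₀k : k₀ ≤ k := le_max_left _ _
  clear_value k
  have hKc : 2*B₀ ≤ Kconst k b ε := by
    have hεk : ε^k ≤ ε^k₀ := pow_le_pow_of_le_one hε.le hε1.le hk₀k
    have hd0 : 0 < 2*b*(1-ε)*ε^k := mul_pos (mul_pos h2b hε1') (pow_pos hε k)
    rw [Kconst, le_div_iff₀ hd0]
    have h1 : ε^k₀ * (2*B₀ * (2*b*(1-ε))) < 1 := by
      rw [← lt_div_iff₀ hX]
      exact hk₀
    nlinarith [pow_pos hε k, pow_pos hε k₀]
  -- Step 5: choose m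
  set δ : ℝ := min (b*ε/4) (1/(8*B₀)) with hδdef
  have hδ0 : 0 < δ := lt_min (by linarith) (one_div_pos.mpr (by linarith))
  have hδb : δ ≤ b*ε/4 := min_le_left _ _
  have hδB : δ ≤ 1/(8*B₀) := min_le_right _ _
  clear_value δ
  obtain ⟨m, hm⟩ := hunbdd (1 + b/δ)
  refine ⟨k, m, ?_⟩
  intro lam hlam n hn
  have hkn : k ≤ n := le_trans (le_max_left _ _) hn
  have hmn : m ≤ n := le_trans (le_max_right _ _) hn
  have hκn : κ ≤ n := le_trans hκk hkn
  have hcn : 1 + b/δ < c n := lt_of_lt_of_le hm (hmono.monotone hmn)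
  have hc1 : 1 < c n := hone n
  have hlam' : 4*b*ε < ‖lam‖ := hlam
  have hlamn : 0 < ‖lam‖ := lt_trans h4b hlam'
  have hlam0 : lam ≠ 0 := by rwa [← norm_pos_iff]
  -- norms of T n
  have hTn : ‖T n‖ ≤ b := le_trans (le_max_left _ _) (hple n)
  have hdTn : ‖dMat c n * T n * dMatInv c n‖ ≤ b := le_trans (le_max_right _ _) (hple n)
  -- the lower triangular part is small
  have hW : ‖lowerT (T n)‖ ≤ b/(c n - 1) :=
    lowerT_norm_le hc1 hb0.le _ (fun i j hij => entry_decay c hc1 _ hdTn i j hij)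
  have hWδ : ‖lowerT (T n)‖ ≤ δ := by
    refine hW.trans ?_
    have h2 : b/δ < c n - 1 := by linarith
    rw [div_lt_iff₀ hδ0] at h2
    rw [div_le_iff₀ (by linarith : (0:ℝ) < c n - 1)]
    linarith
  set U : Matrix (Fin n) (Fin n) ℂ := upperT (T n) with hUdef
  set Wm : Matrix (Fin n) (Fin n) ℂ := lowerT (T n) with hWdef
  have hTUW : T n = U + Wm := (upperT_add_lowerT (T n)).symm
  have hU0 : Supp 0 U := supp_upperT (T n)
  clear_value U Wm
  have hUeq : U = T n - Wm := by rw [hTUW]; abel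
  have hδleb : δ ≤ b := by
    have h9 : b*ε ≤ b*1 := mul_le_mul_of_nonneg_left hε1.le hb0.le
    linarith
  have hU2b : ‖U‖ ≤ 2*b := by
    rw [hUeq]
    calc ‖T n - Wm‖ ≤ ‖T n‖ + ‖Wm‖ := norm_sub_le _ _
      _ ≤ b + b := add_le_add hTn (hWδ.trans hδleb)
      _ = 2*b := by ring
  set u : Matrix (Fin n) (Fin n) ℂ := umat n κ with hudef
  have hu1 : ‖u‖ ≤ 1 := norm_umat_le hκn
  have hTu : ‖T n * u - T n‖ ≤ b*ε/2 := by
    have h3 := hK κ hκK n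
    have h4 : (0:ℝ) ≤ pnorm c n (umat n κ * T n - T n) :=
      le_trans (norm_nonneg _) (le_max_left _ _)
    have h5 : pnorm c n (T n * umat n κ - T n) ≤ b*ε/2 := by linarith
    exact le_trans (le_max_left _ _) h5
  set R : Matrix (Fin n) (Fin n) ℂ := U * u with hRdef
  set V : Matrix (Fin n) (Fin n) ℂ := U - R with hVdef
  have hRV : R + V = U := by rw [hVdef]; abel
  have hRρ : ‖R‖ ≤ 2*b := by
    calc ‖U * u‖ ≤ ‖U‖ * ‖u‖ := norm_mul_le _ _
      _ ≤ (2*b) * 1 := mul_le_mul hU2b hu1 (norm_nonneg _) h2b.le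
      _ = 2*b := mul_one _
  have hVv : ‖V‖ ≤ b*ε := by
    have hVeq : V = (T n - T n * u) - Wm + Wm * u := by
      rw [hVdef, hRdef, hUeq, sub_mul]
      abel
    rw [hVeq]
    have h6 : ‖T n - T n * u‖ ≤ b*ε/2 := by rw [norm_sub_rev]; exact hTu
    have h7 : ‖Wm * u‖ ≤ δ := by
      calc ‖Wm * u‖ ≤ ‖Wm‖ * ‖u‖ := norm_mul_le _ _
        _ ≤ δ * 1 := mul_le_mul hWδ hu1 (norm_nonneg _) hδ0.le
        _ = δ := mul_one _
    calc ‖(T n - T n * u) - Wm + Wm * u‖ ≤ ‖(T n - T n * u) - Wm‖ + ‖Wm * u‖ :=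
        norm_add_le _ _
      _ ≤ (‖T n - T n * u‖ + ‖Wm‖) + ‖Wm * u‖ := add_le_add_left (norm_sub_le _ _) _
      _ ≤ (b*ε/2 + δ) + δ := add_le_add (add_le_add h6 hWδ) h7
      _ ≤ b*ε := by linarith
  -- support conditions
  have hRsupp : Supp ((n:ℝ)/κ) R := supp_mul_umat hκn hU0
  have hVsupp : Supp 0 V := hU0.sub (hRsupp.mono (by positivity))
  have hκ0' : ((κ:ℕ):ℝ) ≠ 0 := by
    have : (0:ℝ) < κ := by exact_mod_cast hκ1
    linarith
  have hns : (n:ℝ) ≤ κ * ((n:ℝ)/κ) := le_of_eq (by field_simp)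
  have hword := word_bound hκ1 hns h2b.le hbε.le hRsupp hRρ hVsupp hVv J
  rw [hRV] at hword
  -- the sum bound
  have hsum : ∑ t ∈ Finset.range κ, (J.choose t : ℝ) * (2*b)^t * (b*ε)^(J-t)
      ≤ 1/2 * (4*b*ε)^J := by
    have hterm : ∀ t ∈ Finset.range κ, (J.choose t : ℝ) * (2*b)^t * (b*ε)^(J-t)
        ≤ (J:ℝ)^κ * (2/ε)^κ * (b^J * ε^J) := by
      intro t ht
      rw [Finset.mem_range] at ht
      have htJ : t ≤ J := le_trans (le_of_lt ht) hκJ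
      have hkey : (2*b)^t * (b*ε)^(J-t) * ε^t = 2^t * (b^J * ε^J) := by
        rw [mul_pow, mul_pow]
        calc (2:ℝ)^t*b^t * (b^(J-t) * ε^(J-t)) * ε^t
            = 2^t * (b^t*b^(J-t)) * (ε^(J-t)*ε^t) := by ring
          _ = 2^t * (b^J * ε^J) := by
              rw [← pow_add, ← pow_add, show t+(J-t)=J from by omega,
                show J-t+t=J from by omega]
              ring
      have he1 : (2*b)^t * (b*ε)^(J-t) = (2/ε)^t * (b^J * ε^J) := by
        rw [div_pow, div_mul_eq_mul_div, eq_div_iff (pow_pos hε t).ne']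
        linear_combination hkey
      have hch : (J.choose t : ℝ) ≤ (J:ℝ)^κ := by
        calc (J.choose t : ℝ) ≤ (J:ℝ)^t := by exact_mod_cast Nat.choose_le_pow J t
          _ ≤ (J:ℝ)^κ := pow_le_pow_right₀ (by exact_mod_cast hJ1) (le_of_lt ht)
      have h2e : (1:ℝ) ≤ 2/ε := by
        rw [le_div_iff₀ hε]; linarith
      have hfrac : (2/ε)^t ≤ (2/ε)^κ := pow_le_pow_right₀ h2e (le_of_lt ht)
      calc (J.choose t : ℝ) * (2*b)^t * (b*ε)^(J-t)
          = (J.choose t : ℝ) * ((2/ε)^t * (b^J * ε^J)) := by rw [mul_assoc, he1]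
        _ ≤ (J:ℝ)^κ * ((2/ε)^κ * (b^J * ε^J)) := by
            have hbJ : (0:ℝ) ≤ b^J * ε^J :=
              mul_nonneg (pow_nonneg hb0.le J) (pow_nonneg hε.le J)
            have h2et : (0:ℝ) ≤ (2/ε)^t := pow_nonneg (div_pos two_pos hε).le t
            exact mul_le_mul hch (mul_le_mul_of_nonneg_right hfrac hbJ)
              (mul_nonneg h2et hbJ) (by positivity)
        _ = (J:ℝ)^κ * (2/ε)^κ * (b^J * ε^J) := by ring
    calc ∑ t ∈ Finset.range κ, (J.choose t : ℝ) * (2*b)^t * (b*ε)^(J-t)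
        ≤ ∑ _t ∈ Finset.range κ, (J:ℝ)^κ * (2/ε)^κ * (b^J * ε^J) :=
          Finset.sum_le_sum hterm
      _ = (κ:ℝ) * ((J:ℝ)^κ * (2/ε)^κ) * (b^J * ε^J) := by
          rw [Finset.sum_const, Finset.card_range]
          simp [nsmul_eq_mul]; ring
      _ ≤ (1/2 * 4^J) * (b^J * ε^J) :=
          mul_le_mul_of_nonneg_right hJbound
            (mul_nonneg (pow_nonneg hb0.le J) (pow_nonneg hε.le J))
      _ = 1/2 * (4*b*ε)^J := by rw [mul_pow, mul_pow]; ring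
  have hUJ : ‖U^J‖ ≤ 1/2 * (4*b*ε)^J := hword.trans hsum
  -- Neumann partial sum
  have hlaminv : ‖lam⁻¹‖ ≤ (4*b*ε)⁻¹ := by
    rw [norm_inv]
    exact inv_anti₀ h4b hlam'.le
  set q : Matrix (Fin n) (Fin n) ℂ := ∑ j ∈ Finset.range J, (lam⁻¹)^(j+1) • U^j with hqdef
  have hq : ‖q‖ ≤ B₀ := by
    rw [hqdef, hB₀def]
    refine (norm_sum_le _ _).trans (Finset.sum_le_sum fun j _ => ?_)
    rw [norm_smul, norm_pow]
    have hp3 : ‖lam⁻¹‖^(j+1) * ‖U^j‖ ≤ ((4*b*ε)⁻¹)^(j+1) * (2*b)^j :=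
      mul_le_mul (pow_le_pow_left₀ (norm_nonneg _) hlaminv _)
        (norm_pow_le' U hU2b j) (norm_nonneg _)
        (pow_nonneg (inv_nonneg.mpr h4b.le) _)
    refine hp3.trans (le_of_eq ?_)
    rw [inv_pow]; ring
  have hxq : (lam • (1 : Matrix (Fin n) (Fin n) ℂ) - U) * q
      = 1 - (lam⁻¹)^J • U^J := by
    rw [hqdef, Finset.mul_sum]
    have hterm : ∀ j, (lam • (1 : Matrix (Fin n) (Fin n) ℂ) - U) * ((lam⁻¹)^(j+1) • U^j)
        = (lam⁻¹)^j • U^j - (lam⁻¹)^(j+1) • U^(j+1) := by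
      intro j
      rw [sub_mul, Matrix.smul_mul, one_mul, Matrix.mul_smul, smul_smul]
      congr 2
      · rw [pow_succ' lam⁻¹ j, ← mul_assoc, mul_inv_cancel₀ hlam0, one_mul]
      · rw [← pow_succ']
    calc ∑ j ∈ Finset.range J, (lam • (1 : Matrix (Fin n) (Fin n) ℂ) - U) * ((lam⁻¹)^(j+1) • U^j)
        = ∑ j ∈ Finset.range J, ((lam⁻¹)^j • U^j - (lam⁻¹)^(j+1) • U^(j+1)) := by
          exact Finset.sum_congr rfl fun j _ => hterm j
      _ = (lam⁻¹)^0 • U^0 - (lam⁻¹)^J • U^J :=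
          Finset.sum_range_sub' (fun j => (lam⁻¹)^j • U^j) J
      _ = 1 - (lam⁻¹)^J • U^J := by rw [pow_zero, pow_zero, one_smul]
  set E : Matrix (Fin n) (Fin n) ℂ := (lam⁻¹)^J • U^J with hEdef
  have hE : ‖E‖ ≤ 1/2 := by
    rw [hEdef, norm_smul, norm_pow]
    have hp4 : ‖lam⁻¹‖^J * ‖U^J‖ ≤ ((4*b*ε)⁻¹)^J * (1/2 * (4*b*ε)^J) :=
      mul_le_mul (pow_le_pow_left₀ (norm_nonneg _) hlaminv _) hUJ
        (norm_nonneg _) (pow_nonneg (inv_nonneg.mpr h4b.le) _)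
    refine hp4.trans (le_of_eq ?_)
    rw [inv_pow]
    field_simp
  obtain ⟨h₁, hh1, hh2, hh3⟩ := inv_one_sub E hE
  set y : Matrix (Fin n) (Fin n) ℂ := q * h₁ with hydef
  have hxy : (lam • (1 : Matrix (Fin n) (Fin n) ℂ) - U) * y = 1 := by
    rw [hydef, ← mul_assoc, hxq]
    exact hh1
  have hyn : ‖y‖ ≤ 2*B₀ := by
    calc ‖q * h₁‖ ≤ ‖q‖ * ‖h₁‖ := norm_mul_le _ _
      _ ≤ B₀ * 2 := mul_le_mul hq hh3 (norm_nonneg _) hB₀pos.le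
      _ = 2*B₀ := by ring
  -- second matrix
  set G : Matrix (Fin n) (Fin n) ℂ := y * Wm with hGdef
  have hG : ‖G‖ ≤ 1/2 := by
    calc ‖y * Wm‖ ≤ ‖y‖ * ‖Wm‖ := norm_mul_le _ _
      _ ≤ (2*B₀) * (1/(8*B₀)) := mul_le_mul hyn (hWδ.trans hδB) (norm_nonneg _)
          (by linarith)
      _ = 1/4 := by
          have h8 : (8:ℝ)*B₀ ≠ 0 := ne_of_gt (by linarith)
          field_simp
          ring
      _ ≤ 1/2 := by norm_num
  obtain ⟨h₂, hg1, hg2, hg3⟩ := inv_one_sub G hG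
  have hfac : lam • (1 : Matrix (Fin n) (Fin n) ℂ) - T n
      = (lam • (1 : Matrix (Fin n) (Fin n) ℂ) - U) * (1 - G) := by
    rw [mul_sub, mul_one, hGdef, ← mul_assoc, hxy, one_mul, hTUW]
    abel
  set z : Matrix (Fin n) (Fin n) ℂ := h₂ * y with hzdef
  have hz1 : (lam • (1 : Matrix (Fin n) (Fin n) ℂ) - T n) * z = 1 := by
    rw [hfac, hzdef, mul_assoc, ← mul_assoc (1 - G), hg1, one_mul, hxy]
  have hzn : ‖z‖ ≤ 2*(2*B₀) := by
    calc ‖h₂ * y‖ ≤ ‖h₂‖ * ‖y‖ := norm_mul_le _ _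
      _ ≤ 2 * (2*B₀) := mul_le_mul hg3 hyn (norm_nonneg _) (by norm_num)
  refine ⟨@isUnit_of_invertible _ _ _ (invertibleOfRightInverse _ _ hxy), ?_,
    @isUnit_of_invertible _ _ _ (invertibleOfRightInverse _ _ hz1), ?_⟩
  · rw [Matrix.inv_eq_right_inv hxy]
    calc opNorm y = ‖y‖ := rfl
      _ ≤ 2*B₀ := hyn
      _ ≤ Kconst k b ε := hKc
  · rw [Matrix.inv_eq_right_inv hz1]
    calc opNorm z = ‖z‖ := rfl
      _ ≤ 2*(2*B₀) := hzn
      _ ≤ 2 * Kconst k b ε := by linarith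

end
end

section
/- Let e = (e_n) ∈ A be nonzero with e_n² = e_n for every n (so e is an idempotent), and suppose e is a minimal idempotent of A, i.e., for every x = (x_n) ∈ A there exists λ ∈ ℂ with e_n x_n e_n = λ e_n for all n. Then there is exactly one m ∈ ℕ with e_m ≠ 0 (so e_n = 0 for all n ≠ m), and moreover e_m is a minimal idempotent of M_m(ℂ): for every y ∈ M_m(ℂ) there is λ ∈ ℂ with e_m y e_m = λ e_m. -/
noncomputable section

lemma pnorm_zero (c : ℕ → ℝ) (n : ℕ) : pnorm c n 0 = 0 := by
  rw [pnorm, mul_zero, zero_mul, opNorm_zero, max_self]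

/-- A sequence supported at a single index belongs to `A`. -/
lemma memA_single (c : ℕ → ℝ) (m : ℕ) (y : Matrix (Fin m) (Fin m) ℂ) :
    memA c (Function.update (fun n => (0 : Matrix (Fin n) (Fin n) ℂ)) m y) := by
  constructor
  · refine ⟨max (pnorm c m y) 0, fun n => ?_⟩
    rcases eq_or_ne n m with rfl | h
    · rw [Function.update_self]; exact le_max_left _ _
    · rw [Function.update_of_ne h, pnorm_zero]; exact le_max_right _ _
  · intro ε hε
    refine ⟨m + 1, fun k hk n => ?_⟩
    rcases eq_or_ne n m with rfl | h
    · have hu : umat n k = 1 := by rw [umat, if_neg]; omega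
      rw [hu, mul_one, one_mul, sub_self, pnorm_zero]
      linarith
    · rw [Function.update_of_ne h, zero_mul, mul_zero, sub_self, pnorm_zero]
      linarith

/-- Let `e = (e_n) ∈ A` be a nonzero idempotent (`e_n² = e_n` for all `n`)
which is a minimal idempotent of `A`:  for every `x = (x_n) ∈ A` there is `λ ∈ ℂ` with
`e_n x_n e_n = λ e_n` for all `n`.  Then there is exactly one `m` with `e_m ≠ 0`, and
`e_m` is a minimal idempotent of `M_m(ℂ)`. -/
theorem stmt17 (c : ℕ → ℝ) (hmono : StrictMono c) (hone : ∀ n, 1 < c n)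
    (hunbdd : ∀ M : ℝ, ∃ n, M < c n)
    (e : ∀ n, Matrix (Fin n) (Fin n) ℂ) (he : memA c e) (he0 : e ≠ 0)
    (hidem : ∀ n, e n * e n = e n)
    (hmin : ∀ x : ∀ n, Matrix (Fin n) (Fin n) ℂ, memA c x →
      ∃ lam : ℂ, ∀ n, e n * x n * e n = lam • e n) :
    ∃ m : ℕ, e m ≠ 0 ∧ (∀ n, n ≠ m → e n = 0) ∧
      ∀ y : Matrix (Fin m) (Fin m) ℂ, ∃ lam : ℂ, e m * y * e m = lam • e m := by
  have hne : ∃ m, e m ≠ 0 := by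
    by_contra h
    push_neg at h
    exact he0 (funext fun n => h n)
  obtain ⟨m, hm⟩ := hne
  refine ⟨m, hm, ?_, ?_⟩
  · intro n hn
    by_contra hn0
    obtain ⟨lam, hlam⟩ := hmin _ (memA_single c m (e m))
    have h1 := hlam m
    rw [Function.update_self, hidem, hidem] at h1
    have hl1 : lam = 1 := by
      have : (lam - 1) • e m = 0 := by
        rw [sub_smul, one_smul, ← h1, sub_self]
      rcases smul_eq_zero.mp this with h' | h'
      · exact sub_eq_zero.mp h'
      · exact absurd h' hm
    have h2 := hlam n
    rw [Function.update_of_ne hn, mul_zero, zero_mul, hl1, one_smul] at h2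
    exact hn0 h2.symm
  · intro y
    obtain ⟨lam, hlam⟩ := hmin _ (memA_single c m y)
    refine ⟨lam, ?_⟩
    have := hlam m
    rwa [Function.update_self] at this

end
end
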